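/- arXiv:1010.4922 — 9 statements merged into one kernel-verified Lean document; each statement's English description precedes it below -/
import Mathlib

section
/- Let A : B → B be a bounded linear operator that is symmetric with respect to the inner product of H, i.e. ⟪j(A x), j y⟫_H = ⟪j x, j(A y)⟫_H for all x, y ∈ B. Then ‖j(A x)‖_H ≤ ‖A‖_{L(B)} · ‖j x‖_H for every x ∈ B; consequently there is a unique bounded linear operator Ā : H → H with Ā（j x）= j(A x) for all x ∈ B and ‖Ā‖_{L(H)} ≤ ‖A‖_{L(B)}. (Lax's theorem, part 1.) -/
/-- **Lax's theorem, part 1.** If `B` is a separable complex Banach space continuously and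
densely embedded (via `j`) in a complex Hilbert space `H`, and `A : B → B` is a bounded linear
operator which is symmetric with respect to the inner product of `H`, then
`‖j (A x)‖ ≤ ‖A‖ ⬝ ‖j x‖` for all `x`, and consequently `A` has a unique bounded linear
extension `Ā : H → H` with `Ā (j x) = j (A x)` and `‖Ā‖ ≤ ‖A‖`. -/
theorem lax_part_one
    {B H : Type*} [NormedAddCommGroup B] [NormedSpace ℂ B] [CompleteSpace B]
    [TopologicalSpace.SeparableSpace B]
    [NormedAddCommGroup H] [InnerProductSpace ℂ H] [CompleteSpace H]
    (j : B →L[ℂ] H) (hj_inj : Function.Injective j) (hj_dense : DenseRange j)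
    (A : B →L[ℂ] B)
    (hsym : ∀ x y : B, (inner ℂ (j (A x)) (j y) : ℂ) = (inner ℂ (j x) (j (A y)) : ℂ)) :
    (∀ x : B, ‖j (A x)‖ ≤ ‖A‖ * ‖j x‖) ∧
      ∃! Abar : H →L[ℂ] H, (∀ x : B, Abar (j x) = j (A x)) ∧ ‖Abar‖ ≤ ‖A‖ := by
  -- iterated symmetry
  have hsymk : ∀ (k : ℕ) (u v : B),
      (inner ℂ (j ((A ^ k) u)) (j v) : ℂ) = inner ℂ (j u) (j ((A ^ k) v)) := by
    intro k
    induction k with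
    | zero => intro u v; simp
    | succ n ih =>
      intro u v
      have h1 : (A ^ (n + 1)) u = (A ^ n) (A u) := by
        rw [pow_succ]; rfl
      have h2 : A ((A ^ n) v) = (A ^ (n + 1)) v := by
        rw [pow_succ']; rfl
      rw [h1, ih (A u) v, hsym, h2]
  -- squaring inequality
  have hsq : ∀ (k : ℕ) (x : B), ‖j ((A ^ k) x)‖ ^ 2 ≤ ‖j x‖ * ‖j ((A ^ (2 * k)) x)‖ := by
    intro k x
    have h1 : ‖j ((A ^ k) x)‖ ^ 2
        = RCLike.re (inner ℂ (j ((A ^ k) x)) (j ((A ^ k) x)) : ℂ) := by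
      rw [inner_self_eq_norm_sq]
    have h2 : (inner ℂ (j ((A ^ k) x)) (j ((A ^ k) x)) : ℂ)
        = inner ℂ (j x) (j ((A ^ (2 * k)) x)) := by
      rw [hsymk k x ((A ^ k) x)]
      have hkk : (A ^ k) ((A ^ k) x) = (A ^ (2 * k)) x := by
        rw [two_mul, pow_add]; rfl
      rw [hkk]
    calc ‖j ((A ^ k) x)‖ ^ 2
        = RCLike.re ((inner ℂ (j x) (j ((A ^ (2 * k)) x))) : ℂ) := by rw [h1, h2]
      _ ≤ ‖(inner ℂ (j x) (j ((A ^ (2 * k)) x)) : ℂ)‖ := RCLike.re_le_norm _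
      _ ≤ ‖j x‖ * ‖j ((A ^ (2 * k)) x)‖ := norm_inner_le_norm _ _
  -- main induction
  have key : ∀ (x : B) (n : ℕ),
      ‖j (A x)‖ ^ (2 ^ n) ≤ ‖j x‖ ^ (2 ^ n - 1) * ‖j ((A ^ (2 ^ n)) x)‖ := by
    intro x n
    induction n with
    | zero => simp
    | succ n ih =>
      have h1 : (1 : ℕ) ≤ 2 ^ n := Nat.one_le_two_pow
      have h2 : ‖j (A x)‖ ^ (2 ^ (n + 1)) = (‖j (A x)‖ ^ (2 ^ n)) ^ 2 := by
        rw [← pow_mul]; ring_nf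
      have h3 : (‖j (A x)‖ ^ (2 ^ n)) ^ 2
          ≤ (‖j x‖ ^ (2 ^ n - 1) * ‖j ((A ^ (2 ^ n)) x)‖) ^ 2 :=
        pow_le_pow_left₀ (by positivity) ih 2
      have h4 : (‖j x‖ ^ (2 ^ n - 1) * ‖j ((A ^ (2 ^ n)) x)‖) ^ 2
          = ‖j x‖ ^ (2 * (2 ^ n - 1)) * ‖j ((A ^ (2 ^ n)) x)‖ ^ 2 := by
        rw [mul_pow, ← pow_mul]; ring_nf
      have h5 : ‖j x‖ ^ (2 * (2 ^ n - 1)) * ‖j ((A ^ (2 ^ n)) x)‖ ^ 2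
          ≤ ‖j x‖ ^ (2 * (2 ^ n - 1)) * (‖j x‖ * ‖j ((A ^ (2 * 2 ^ n)) x)‖) :=
        mul_le_mul_of_nonneg_left (hsq (2 ^ n) x) (by positivity)
      have h6 : ‖j x‖ ^ (2 * (2 ^ n - 1)) * (‖j x‖ * ‖j ((A ^ (2 * 2 ^ n)) x)‖)
          = ‖j x‖ ^ (2 ^ (n + 1) - 1) * ‖j ((A ^ (2 ^ (n + 1))) x)‖ := by
        have he : 2 * 2 ^ n = 2 ^ (n + 1) := by ring
        have hexp : ∀ m : ℕ, 1 ≤ m → 2 * (m - 1) + 1 = 2 * m - 1 := by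
          intro m hm; omega
        rw [← mul_assoc, ← pow_succ, hexp (2 ^ n) h1, he]
      calc ‖j (A x)‖ ^ (2 ^ (n + 1)) = (‖j (A x)‖ ^ (2 ^ n)) ^ 2 := h2
        _ ≤ (‖j x‖ ^ (2 ^ n - 1) * ‖j ((A ^ (2 ^ n)) x)‖) ^ 2 := h3
        _ = ‖j x‖ ^ (2 * (2 ^ n - 1)) * ‖j ((A ^ (2 ^ n)) x)‖ ^ 2 := h4
        _ ≤ _ := h5
        _ = _ := h6
  -- Part 1
  have part1 : ∀ x : B, ‖j (A x)‖ ≤ ‖A‖ * ‖j x‖ := by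
    intro x
    rcases eq_or_ne x 0 with rfl | hx
    · simp
    rcases eq_or_lt_of_le (norm_nonneg A) with hA | hA
    · have : A = 0 := by
        apply norm_eq_zero.mp; exact hA.symm
      simp [this]
    have hjx : 0 < ‖j x‖ := by
      rw [norm_pos_iff]
      intro h
      exact hx (hj_inj (by simpa using h))
    -- bound: ‖j (A x)‖ ^ (2^n) ≤ ‖j x‖ ^ (2^n - 1) * (‖j‖ * ‖A‖ ^ (2^n) * ‖x‖)
    set r : ℝ := ‖j (A x)‖ / (‖A‖ * ‖j x‖) with hr
    have hbound : ∀ n : ℕ, r ^ (2 ^ n) ≤ ‖j‖ * ‖x‖ / ‖j x‖ := by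
      intro n
      have h1 : ‖j ((A ^ (2 ^ n)) x)‖ ≤ ‖j‖ * (‖A‖ ^ (2 ^ n) * ‖x‖) := by
        calc ‖j ((A ^ (2 ^ n)) x)‖ ≤ ‖j‖ * ‖(A ^ (2 ^ n)) x‖ := j.le_opNorm _
          _ ≤ ‖j‖ * (‖A ^ (2 ^ n)‖ * ‖x‖) := by
              exact mul_le_mul_of_nonneg_left ((A ^ (2 ^ n)).le_opNorm x) (norm_nonneg j)
          _ ≤ ‖j‖ * (‖A‖ ^ (2 ^ n) * ‖x‖) := by
              gcongr
              exact norm_pow_le' A (by positivity)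
      have h2 : ‖j (A x)‖ ^ (2 ^ n)
          ≤ ‖j x‖ ^ (2 ^ n - 1) * (‖j‖ * (‖A‖ ^ (2 ^ n) * ‖x‖)) :=
        (key x n).trans (mul_le_mul_of_nonneg_left h1 (by positivity))
      have hpos : (0 : ℝ) < (‖A‖ * ‖j x‖) ^ (2 ^ n) := by positivity
      rw [hr, div_pow, div_le_div_iff₀ hpos hjx]
      calc ‖j (A x)‖ ^ (2 ^ n) * ‖j x‖
          ≤ (‖j x‖ ^ (2 ^ n - 1) * (‖j‖ * (‖A‖ ^ (2 ^ n) * ‖x‖))) * ‖j x‖ := by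
            exact mul_le_mul_of_nonneg_right h2 (le_of_lt hjx)
        _ = ‖j‖ * ‖x‖ * (‖A‖ ^ (2 ^ n) * (‖j x‖ ^ (2 ^ n - 1) * ‖j x‖)) := by ring
        _ = ‖j‖ * ‖x‖ * (‖A‖ ^ (2 ^ n) * ‖j x‖ ^ (2 ^ n)) := by
            rw [← pow_succ]
            congr 3
            have : (1 : ℕ) ≤ 2 ^ n := Nat.one_le_two_pow
            omega
        _ = ‖j‖ * ‖x‖ * (‖A‖ * ‖j x‖) ^ (2 ^ n) := by rw [mul_pow]
    -- conclude r ≤ 1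
    have hr1 : r ≤ 1 := by
      by_contra hgt
      push_neg at hgt
      obtain ⟨n, hn⟩ := pow_unbounded_of_one_lt (‖j‖ * ‖x‖ / ‖j x‖) hgt
      have h1 : r ^ n ≤ r ^ (2 ^ n) :=
        pow_le_pow_right₀ (le_of_lt hgt) Nat.lt_two_pow_self.le
      exact absurd ((h1.trans (hbound n))) (not_le.mpr hn)
    have := (div_le_one (by positivity)).mp hr1
    linarith
  refine ⟨part1, ?_⟩
  -- Part 2: construct the extension
  classical
  set K : Submodule ℂ H := LinearMap.range (j : B →ₗ[ℂ] H) with hK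
  have hrange : (K : Set H) = Set.range j := by
    ext y; simp [hK, LinearMap.mem_range]
  set e : B ≃ₗ[ℂ] K := LinearEquiv.ofInjective (j : B →ₗ[ℂ] H) hj_inj with he_def
  have he_apply : ∀ x : B, ((e x : K) : H) = j x := by
    intro x
    rw [he_def]
    exact LinearEquiv.ofInjective_apply (j : B →ₗ[ℂ] H) x
  set φ : K →ₗ[ℂ] H :=
    ((j : B →ₗ[ℂ] H).comp (A : B →ₗ[ℂ] B)).comp (e.symm : K →ₗ[ℂ] B) with hφ
  have hφ_apply : ∀ x : B, φ (e x) = j (A x) := by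
    intro x
    simp [hφ]
  have hφ_bound : ∀ y : K, ‖φ y‖ ≤ ‖A‖ * ‖y‖ := by
    intro y
    obtain ⟨x, rfl⟩ : ∃ x, e x = y := ⟨e.symm y, e.apply_symm_apply y⟩
    have hnorm : ‖e x‖ = ‖j x‖ := by
      rw [← he_apply x]; rfl
    rw [hφ_apply, hnorm]
    exact part1 x
  set φL : K →L[ℂ] H := φ.mkContinuous ‖A‖ hφ_bound with hφL
  have h_ui : IsUniformInducing (K.subtypeL : K →L[ℂ] H) :=
    K.subtypeₗᵢ.isometry.isUniformInducing
  have h_dense : DenseRange (K.subtypeL : K →L[ℂ] H) := by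
    have : Set.range (K.subtypeL : K →L[ℂ] H) = (K : Set H) := Subtype.range_coe
    rw [DenseRange, this, hrange]
    exact hj_dense
  set Abar : H →L[ℂ] H := φL.extend K.subtypeL with hAbar
  have hAbar_eq : ∀ x : B, Abar (j x) = j (A x) := by
    intro x
    have h1 : j x = K.subtypeL (e x) := (he_apply x).symm
    rw [h1, hAbar, ContinuousLinearMap.extend_eq (h_dense := h_dense) (h_e := h_ui)]
    rw [hφL]
    exact hφ_apply x
  have hAbar_norm : ‖Abar‖ ≤ ‖A‖ := by
    refine ContinuousLinearMap.opNorm_le_bound _ (norm_nonneg A) ?_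
    have hclosed : IsClosed {y : H | ‖Abar y‖ ≤ ‖A‖ * ‖y‖} :=
      isClosed_le (Abar.continuous.norm) (continuous_const.mul continuous_norm)
    refine isClosed_property hj_dense hclosed fun x => ?_
    rw [hAbar_eq x]
    exact part1 x
  refine ⟨Abar, ⟨hAbar_eq, hAbar_norm⟩, ?_⟩
  rintro T ⟨hT_eq, _⟩
  refine ContinuousLinearMap.coeFn_injective ?_
  refine hj_dense.equalizer T.continuous Abar.continuous ?_
  funext x
  simp [hT_eq x, hAbar_eq x]
end

section
/- Let A : B → B be a bounded linear operator that is symmetric with respect to the inner product of H (⟪j(A x), j y⟫_H = ⟪j x, j(A y)⟫_H for all x, y ∈ B), and let Ā : H → H be its unique bounded extension (Ā ∘ j = j ∘ A). Then the spectrum of Ā in the Banach algebra L(H) is contained in the spectrum of A in the Banach algebra L(B): σ_H(Ā) ⊆ σ_B(A). (Lax's theorem, part 2.) -/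
open scoped InnerProductSpace

section Aux

variable {B H : Type*} [NormedAddCommGroup B] [NormedSpace ℂ B]
  [NormedAddCommGroup H] [InnerProductSpace ℂ H]

lemma lax_pow_sym (j : B →L[ℂ] H) (S : B →L[ℂ] B)
    (hsym : ∀ x y : B, (inner ℂ (j (S x)) (j y) : ℂ) = (inner ℂ (j x) (j (S y)) : ℂ)) :
    ∀ (n : ℕ) (x y : B), (inner ℂ (j ((S ^ n) x)) (j y) : ℂ) = inner ℂ (j x) (j ((S ^ n) y)) := by
  intro n
  induction n with
  | zero => simp
  | succ n ih =>
    intro x y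
    have h1 : (S ^ (n + 1)) x = (S ^ n) (S x) := by
      rw [pow_succ, ContinuousLinearMap.mul_apply]
    have h2 : (S ^ (n + 1)) y = S ((S ^ n) y) := by
      rw [pow_succ', ContinuousLinearMap.mul_apply]
    rw [h1, ih (S x) y, hsym, h2]

lemma lax_key (j : B →L[ℂ] H) (hj_inj : Function.Injective j) (S : B →L[ℂ] B)
    (hsym : ∀ x y : B, (inner ℂ (j (S x)) (j y) : ℂ) = (inner ℂ (j x) (j (S y)) : ℂ))
    (x : B) : ‖j (S x)‖ ≤ ‖S‖ * ‖j x‖ := by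
  by_cases hx : x = 0
  · simp [hx]
  have hjx : 0 < ‖j x‖ := by
    rw [norm_pos_iff]
    intro h
    exact hx (hj_inj (by simpa using h))
  -- step inequality
  have step : ∀ k : ℕ, ‖j ((S ^ k) x)‖ ^ 2 ≤ ‖j x‖ * ‖j ((S ^ (k + k)) x)‖ := by
    intro k
    have h0 : (inner ℂ (j ((S ^ k) x)) (j ((S ^ k) x)) : ℂ)
        = inner ℂ (j x) (j ((S ^ (k + k)) x)) := by
      rw [lax_pow_sym j S hsym k x ((S ^ k) x), pow_add, ContinuousLinearMap.mul_apply]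
    calc ‖j ((S ^ k) x)‖ ^ 2
        = RCLike.re (inner ℂ (j ((S ^ k) x)) (j ((S ^ k) x)) : ℂ) :=
          (inner_self_eq_norm_sq _).symm
      _ = RCLike.re (inner ℂ (j x) (j ((S ^ (k + k)) x)) : ℂ) := by rw [h0]
      _ ≤ ‖(inner ℂ (j x) (j ((S ^ (k + k)) x)) : ℂ)‖ := RCLike.re_le_norm _
      _ ≤ ‖j x‖ * ‖j ((S ^ (k + k)) x)‖ := norm_inner_le_norm _ _
  set u := ‖j x‖ with hu
  set a := ‖j (S x)‖ with ha
  have ind : ∀ n : ℕ, u * a ^ (2 ^ n) ≤ u ^ (2 ^ n) * ‖j ((S ^ (2 ^ n)) x)‖ := by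
    intro n
    induction n with
    | zero => simp [pow_one, ha]
    | succ n ih =>
      have he : 2 ^ n + 2 ^ n = 2 ^ (n + 1) := by rw [pow_succ]; ring
      have h2 : ‖j ((S ^ (2 ^ n)) x)‖ ^ 2 ≤ u * ‖j ((S ^ (2 ^ (n + 1))) x)‖ := by
        have := step (2 ^ n)
        rwa [he] at this
      have hnn : (0:ℝ) ≤ u * a ^ (2 ^ n) := by positivity
      have h3 : (u * a ^ (2 ^ n)) ^ 2 ≤ (u ^ (2 ^ n) * ‖j ((S ^ (2 ^ n)) x)‖) ^ 2 :=
        pow_le_pow_left₀ hnn ih 2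
      have hN : 2 ^ (n + 1) = 2 ^ n * 2 := pow_succ 2 n
      rw [hN] at h2
      rw [hN, pow_mul, pow_mul]
      rw [← mul_le_mul_iff_right₀ hjx]
      nlinarith [h3, h2, sq_nonneg (u ^ (2 ^ n)), norm_nonneg (j ((S ^ (2 ^ (n+1))) x)),
        pow_nonneg (norm_nonneg (j x)) (2 ^ n), hN]
  have hg : ∀ n : ℕ, ‖j ((S ^ (2 ^ n)) x)‖ ≤ ‖j‖ * ‖S‖ ^ (2 ^ n) * ‖x‖ := by
    intro n
    calc ‖j ((S ^ (2 ^ n)) x)‖ ≤ ‖j‖ * ‖(S ^ (2 ^ n)) x‖ := j.le_opNorm _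
      _ ≤ ‖j‖ * (‖S ^ (2 ^ n)‖ * ‖x‖) :=
          mul_le_mul_of_nonneg_left ((S ^ (2 ^ n)).le_opNorm x) (norm_nonneg (j : B →L[ℂ] H))
      _ ≤ ‖j‖ * (‖S‖ ^ (2 ^ n) * ‖x‖) := by
          have hp : ‖S ^ (2 ^ n)‖ ≤ ‖S‖ ^ (2 ^ n) := norm_pow_le' S (pow_pos two_pos n)
          have := mul_le_mul_of_nonneg_right hp (norm_nonneg x)
          nlinarith [norm_nonneg (j : B →L[ℂ] H)]
      _ = ‖j‖ * ‖S‖ ^ (2 ^ n) * ‖x‖ := by ring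
  have key : ∀ n : ℕ, u * a ^ (2 ^ n) ≤ (‖S‖ * u) ^ (2 ^ n) * (‖j‖ * ‖x‖) := by
    intro n
    calc u * a ^ (2 ^ n) ≤ u ^ (2 ^ n) * ‖j ((S ^ (2 ^ n)) x)‖ := ind n
      _ ≤ u ^ (2 ^ n) * (‖j‖ * ‖S‖ ^ (2 ^ n) * ‖x‖) :=
          mul_le_mul_of_nonneg_left (hg n) (by positivity)
      _ = (‖S‖ * u) ^ (2 ^ n) * (‖j‖ * ‖x‖) := by rw [mul_pow]; ring
  by_contra hcon
  push_neg at hcon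
  have ha0 : 0 < a := lt_of_le_of_lt (by positivity) hcon
  by_cases hS : ‖S‖ = 0
  · have := key 0
    simp [hS] at this
    nlinarith
  · have hSpos : 0 < ‖S‖ := lt_of_le_of_ne (norm_nonneg S) (Ne.symm hS)
    have hcpos : 0 < ‖S‖ * u := by positivity
    have hrat : 1 < a / (‖S‖ * u) := (one_lt_div hcpos).mpr hcon
    obtain ⟨n, hn⟩ := pow_unbounded_of_one_lt ((‖j‖ * ‖x‖) / u) hrat
    have h1 : (a / (‖S‖ * u)) ^ n ≤ (a / (‖S‖ * u)) ^ (2 ^ n) :=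
      pow_le_pow_right₀ hrat.le (Nat.lt_two_pow_self).le
    have h2 := key n
    have h4 : (a / (‖S‖ * u)) ^ (2 ^ n) ≤ (‖j‖ * ‖x‖) / u := by
      rw [div_pow, div_le_div_iff₀ (pow_pos hcpos _) hjx]
      nlinarith [h2]
    linarith [hn.trans_le h1]

end Aux

/-- **Lax's theorem, part 2.** If `B` is a separable complex Banach space continuously and
densely embedded (via `j`) in a complex Hilbert space `H`, `A : B → B` is a bounded linear
operator symmetric with respect to the inner product of `H`, and `Ā : H → H` is its bounded
extension (`Ā ∘ j = j ∘ A`), then `σ_H(Ā) ⊆ σ_B(A)`. -/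
theorem lax_part_two
    {B H : Type*} [NormedAddCommGroup B] [NormedSpace ℂ B] [CompleteSpace B]
    [TopologicalSpace.SeparableSpace B]
    [NormedAddCommGroup H] [InnerProductSpace ℂ H] [CompleteSpace H]
    (j : B →L[ℂ] H) (hj_inj : Function.Injective j) (hj_dense : DenseRange j)
    (A : B →L[ℂ] B)
    (hsym : ∀ x y : B, (inner ℂ (j (A x)) (j y) : ℂ) = (inner ℂ (j x) (j (A y)) : ℂ))
    (Abar : H →L[ℂ] H) (hext : ∀ x : B, Abar (j x) = j (A x)) :
    spectrum ℂ Abar ⊆ spectrum ℂ A := by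
  intro z hz
  by_contra hzA
  have hsa : IsSelfAdjoint Abar := by
    rw [ContinuousLinearMap.isSelfAdjoint_iff_isSymmetric]
    intro u v
    show (inner ℂ (Abar u) v : ℂ) = inner ℂ u (Abar v)
    refine DenseRange.induction_on₂ hj_dense ?_ (fun a b => ?_) u v
    · apply isClosed_eq
      · exact Continuous.inner (Abar.continuous.comp continuous_fst) continuous_snd
      · exact Continuous.inner continuous_fst (Abar.continuous.comp continuous_snd)
    · rw [hext, hext]; exact hsym a b
  have hzre : z = z.re := hsa.mem_spectrum_eq_re hz
  have hconj : (starRingEnd ℂ) z = z := by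
    rw [hzre]; exact Complex.conj_ofReal _
  have hA : IsUnit (algebraMap ℂ (B →L[ℂ] B) z - A) := spectrum.notMem_iff.mp hzA
  obtain ⟨uu, huu⟩ := hA
  set D : B →L[ℂ] B := algebraMap ℂ (B →L[ℂ] B) z - A with hD
  set R : B →L[ℂ] B := ↑uu⁻¹ with hR
  have hRD : ∀ w : B, R (D w) = w := by
    intro w
    have h1 : (R * D) = 1 := by rw [hR, ← huu]; exact uu.inv_mul
    calc R (D w) = (R * D) w := rfl
      _ = w := by rw [h1]; rfl
  have hDR : ∀ w : B, D (R w) = w := by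
    intro w
    have h1 : (D * R) = 1 := by rw [hR, ← huu]; exact uu.mul_inv
    calc D (R w) = (D * R) w := rfl
      _ = w := by rw [h1]; rfl
  have hDapp : ∀ w : B, D w = z • w - A w := by
    intro w
    simp [hD, Algebra.algebraMap_eq_smul_one, ContinuousLinearMap.sub_apply,
      ContinuousLinearMap.smul_apply, ContinuousLinearMap.one_apply]
  have hsymR : ∀ x y : B, (inner ℂ (j (R x)) (j y) : ℂ) = inner ℂ (j x) (j (R y)) := by
    intro x y
    calc (inner ℂ (j (R x)) (j y) : ℂ) = inner ℂ (j (R x)) (j (D (R y))) := by rw [hDR]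
      _ = z * inner ℂ (j (R x)) (j (R y)) - inner ℂ (j (R x)) (j (A (R y))) := by
          rw [hDapp, map_sub, map_smul, inner_sub_right, inner_smul_right]
      _ = z * inner ℂ (j (R x)) (j (R y)) - inner ℂ (j (A (R x))) (j (R y)) := by rw [hsym]
      _ = inner ℂ (j (D (R x))) (j (R y)) := by
          rw [hDapp, map_sub, map_smul, inner_sub_left, inner_smul_left, hconj]
      _ = inner ℂ (j x) (j (R y)) := by rw [hDR]
  have key := lax_key j hj_inj R hsymR
  set T : H →L[ℂ] H := algebraMap ℂ (H →L[ℂ] H) z - Abar with hT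
  have hTapp : ∀ h : H, T h = z • h - Abar h := by
    intro h
    simp [hT, Algebra.algebraMap_eq_smul_one, ContinuousLinearMap.sub_apply,
      ContinuousLinearMap.smul_apply, ContinuousLinearMap.one_apply]
  have hTj : ∀ w : B, T (j w) = j (D w) := by
    intro w
    rw [hTapp, hDapp, map_sub, map_smul, hext]
  have hbdd0 : ∀ w : B, ‖j w‖ ≤ ‖R‖ * ‖T (j w)‖ := by
    intro w
    rw [hTj]
    calc ‖j w‖ = ‖j (R (D w))‖ := by rw [hRD]
      _ ≤ ‖R‖ * ‖j (D w)‖ := key _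
  have hbdd : ∀ h : H, ‖h‖ ≤ ‖R‖ * ‖T h‖ := by
    intro h
    refine DenseRange.induction_on hj_dense h ?_ hbdd0
    exact isClosed_le continuous_norm (continuous_const.mul (continuous_norm.comp T.continuous))
  have hinj : Function.Injective T := by
    intro h1 h2 hh
    have h0 : T (h1 - h2) = 0 := by rw [map_sub, hh, sub_self]
    have h3 := hbdd (h1 - h2)
    rw [h0, norm_zero, mul_zero] at h3
    exact sub_eq_zero.mp (norm_le_zero_iff.mp h3)
  have hker : T.ker = ⊥ := LinearMap.ker_eq_bot.mpr hinj
  have hanti : AntilipschitzWith ‖R‖₊ T :=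
    T.antilipschitz_of_bound (fun h => by rw [coe_nnnorm]; exact hbdd h)
  have hclosed : IsClosed (Set.range T) := hanti.isClosed_range T.uniformContinuous
  have hsub : Set.range (j : B → H) ⊆ Set.range T := by
    rintro _ ⟨w, rfl⟩
    exact ⟨j (R w), by rw [hTj, hDR]⟩
  have hdense : Dense (Set.range ⇑T) := hj_dense.mono hsub
  have hsurj : Function.Surjective T := by
    have heq : Set.range ⇑T = Set.univ := by rw [← hclosed.closure_eq, hdense.closure_eq]
    exact Set.range_eq_univ.mp heq
  have hrange : T.range = ⊤ := LinearMap.range_eq_top.mpr hsurj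
  exact (spectrum.mem_iff.mp hz)
    ⟨(ContinuousLinearEquiv.ofBijective T hker hrange).toUnit,
      ContinuousLinearEquiv.coe_ofBijective T hker hrange⟩
end

section
/- For every separable complex Banach space B there exist a separable complex Hilbert space H and an injective continuous linear map j : B → H with dense range such that ‖j x‖_H ≤ ‖x‖_B for all x ∈ B. (Kuelbs embedding: B embeds continuously and densely into a separable Hilbert space.) -/
open scoped ENNReal

section Aux

variable {B : Type*} [NormedAddCommGroup B] [NormedSpace ℂ B]

private theorem kuelbs_aux_norm_sq {f : ℕ → (B →L[ℂ] ℂ)} (hf1 : ∀ n, ‖f n‖ ≤ 1) (x : B) :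
    ∀ n : ℕ, ‖((2:ℂ)⁻¹ ^ (n+1)) * f n x‖ ^ (2:ℝ) ≤ ((4:ℝ)⁻¹) ^ (n+1) * ‖x‖^2 := by
  intro n
  rw [show (2:ℝ) = ((2:ℕ):ℝ) by norm_num, Real.rpow_natCast]
  have h1 : ‖((2:ℂ)⁻¹ ^ (n+1)) * f n x‖ = (2:ℝ)⁻¹ ^ (n+1) * ‖f n x‖ := by
    simp [norm_mul, norm_pow]
  rw [h1, mul_pow]
  have hle : ‖f n x‖ ≤ ‖x‖ := le_trans ((f n).le_opNorm x)
    (by nlinarith [hf1 n, norm_nonneg x, (f n).le_opNorm x])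
  have h4 : ((2:ℝ)⁻¹ ^ (n+1)) ^ 2 = (4:ℝ)⁻¹ ^ (n+1) := by
    rw [← pow_mul, mul_comm, pow_mul]; norm_num
  rw [h4]
  have := pow_le_pow_left₀ (norm_nonneg _) hle 2
  nlinarith [pow_nonneg (inv_nonneg.mpr (by norm_num : (0:ℝ) ≤ 4)) (n+1)]

omit [NormedSpace ℂ B] in
private theorem kuelbs_aux_summable : Summable (fun n : ℕ => ((4:ℝ)⁻¹) ^ (n+1) * ‖(x : B)‖^2) := by
  exact ((summable_geometric_of_lt_one (by norm_num) (by norm_num)).mul_right _).comp_injective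
    (add_left_injective 1)

private theorem kuelbs_aux_tsum : (∑' n : ℕ, ((4:ℝ)⁻¹) ^ (n+1)) = 3⁻¹ := by
  have : (fun n : ℕ => ((4:ℝ)⁻¹) ^ (n+1)) = fun n : ℕ => (4:ℝ)⁻¹ * (4:ℝ)⁻¹ ^ n := by
    funext n; rw [pow_succ, mul_comm]
  rw [this, tsum_mul_left, tsum_geometric_of_lt_one (by norm_num) (by norm_num)]
  norm_num

private theorem kuelbs_aux_memℓp {f : ℕ → (B →L[ℂ] ℂ)} (hf1 : ∀ n, ‖f n‖ ≤ 1) (x : B) :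
    Memℓp (fun n : ℕ => ((2:ℂ)⁻¹ ^ (n+1)) * f n x) 2 := by
  apply memℓp_gen
  rw [show ((2:ℝ≥0∞)).toReal = (2:ℝ) by norm_num]
  exact Summable.of_nonneg_of_le (fun n => by positivity) (kuelbs_aux_norm_sq hf1 x)
    (kuelbs_aux_summable (x := x))

end Aux

/-- **Kuelbs embedding.** Every separable complex Banach space `B` embeds continuously and
densely into a separable complex Hilbert space `H`, via an injective continuous linear map
`j : B → H` with dense range and `‖j x‖ ≤ ‖x‖` for all `x`. -/
theorem kuelbs_embedding (B : Type*) [NormedAddCommGroup B] [NormedSpace ℂ B]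
    [CompleteSpace B] [TopologicalSpace.SeparableSpace B] :
    ∃ (H : Type) (_ : NormedAddCommGroup H) (_ : InnerProductSpace ℂ H),
      CompleteSpace H ∧ TopologicalSpace.SeparableSpace H ∧
      ∃ j : B →L[ℂ] H, Function.Injective j ∧ DenseRange j ∧ ∀ x : B, ‖j x‖ ≤ ‖x‖ := by
  classical
  obtain ⟨u, hu⟩ := TopologicalSpace.exists_dense_seq B
  -- norming functionals
  have hex : ∀ n, ∃ f : B →L[ℂ] ℂ, ‖f‖ ≤ 1 ∧ f (u n) = ‖u n‖ := by
    intro n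
    by_cases h : u n = 0
    · exact ⟨0, by simp, by simp [h]⟩
    · obtain ⟨g, hg1, hg2⟩ := exists_dual_vector ℂ (u n) (norm_ne_zero_iff.mpr h)
      exact ⟨g, le_of_eq hg1, hg2⟩
  choose f hf1 hf2 using hex
  -- the separation property
  have hsep : ∀ x : B, (∀ n, f n x = 0) → x = 0 := by
    intro x hx
    have key : ∀ ε : ℝ, 0 < ε → ‖x‖ ≤ 2 * ε := by
      intro ε hε
      obtain ⟨n, hn⟩ := Metric.denseRange_iff.mp hu x ε hε
      have hdist : ‖x - u n‖ < ε := by rwa [dist_eq_norm] at hn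
      have h1 : ‖u n‖ = ‖f n (u n)‖ := by rw [hf2 n]; simp
      have h2 : ‖f n (u n)‖ = ‖f n (u n - x)‖ := by rw [map_sub, hx n, sub_zero]
      have h3 : ‖f n (u n - x)‖ ≤ ‖u n - x‖ := le_trans ((f n).le_opNorm _)
        (by nlinarith [hf1 n, norm_nonneg (u n - x), (f n).le_opNorm (u n - x)])
      have h4 : ‖u n - x‖ = ‖x - u n‖ := norm_sub_rev _ _
      have h5 : ‖x‖ ≤ ‖x - u n‖ + ‖u n‖ := by
        calc ‖x‖ = ‖x - u n + u n‖ := by rw [sub_add_cancel]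
          _ ≤ ‖x - u n‖ + ‖u n‖ := norm_add_le _ _
      linarith [h5, h1 ▸ h2 ▸ (h4 ▸ h3), hdist]
    by_contra hne
    have hpos : 0 < ‖x‖ := norm_pos_iff.mpr hne
    linarith [key (‖x‖/3) (by linarith)]
  -- the linear map into ℓ²
  let Flin : B →ₗ[ℂ] lp (fun _ : ℕ => ℂ) 2 :=
    { toFun := fun x => ⟨fun n => ((2:ℂ)⁻¹ ^ (n+1)) * f n x, kuelbs_aux_memℓp hf1 x⟩
      map_add' := fun x y => by
        apply Subtype.ext
        funext n
        show ((2:ℂ)⁻¹ ^ (n+1)) * f n (x + y)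
            = ((2:ℂ)⁻¹ ^ (n+1)) * f n x + ((2:ℂ)⁻¹ ^ (n+1)) * f n y
        rw [map_add]; ring
      map_smul' := fun c x => by
        apply Subtype.ext
        funext n
        show ((2:ℂ)⁻¹ ^ (n+1)) * f n (c • x) = c * (((2:ℂ)⁻¹ ^ (n+1)) * f n x)
        rw [map_smul]; simp; ring }
  -- norm bound
  have hnorm : ∀ x : B, ‖Flin x‖ ≤ ‖x‖ := by
    intro x
    apply lp.norm_le_of_tsum_le (by norm_num) (norm_nonneg x)
    rw [show ((2:ℝ≥0∞)).toReal = (2:ℝ) by norm_num]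
    have hC : ‖x‖ ^ (2:ℝ) = ‖x‖ ^ 2 := by
      rw [show (2:ℝ) = ((2:ℕ):ℝ) by norm_num, Real.rpow_natCast]
    rw [hC]
    calc (∑' n : ℕ, ‖((2:ℂ)⁻¹ ^ (n+1)) * f n x‖ ^ (2:ℝ))
        ≤ ∑' n : ℕ, ((4:ℝ)⁻¹) ^ (n+1) * ‖x‖^2 := by
          apply Summable.tsum_le_tsum (kuelbs_aux_norm_sq hf1 x)
          · exact Summable.of_nonneg_of_le (fun n => by positivity)
              (kuelbs_aux_norm_sq hf1 x) (kuelbs_aux_summable (x := x))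
          · exact kuelbs_aux_summable (x := x)
      _ = (∑' n : ℕ, ((4:ℝ)⁻¹) ^ (n+1)) * ‖x‖^2 := tsum_mul_right
      _ = 3⁻¹ * ‖x‖^2 := by rw [kuelbs_aux_tsum]
      _ ≤ ‖x‖^2 := by nlinarith [sq_nonneg ‖x‖]
  let j₀ : B →L[ℂ] lp (fun _ : ℕ => ℂ) 2 := Flin.mkContinuous 1 (fun x => by simpa using hnorm x)
  -- the closure of the range
  let S : Submodule ℂ (lp (fun _ : ℕ => ℂ) 2) := (LinearMap.range Flin).topologicalClosure
  refine ⟨S, inferInstance, inferInstance, ?_, ?_, ?_⟩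
  · exact ((LinearMap.range Flin).isClosed_topologicalClosure).completeSpace_coe
  all_goals {
  have hmem : ∀ x : B, j₀ x ∈ S := fun x =>
    Submodule.le_topologicalClosure _ ⟨x, rfl⟩
  let j : B →L[ℂ] ↥S := j₀.codRestrict S hmem
  have himg : Subtype.val '' Set.range (⇑j) = (LinearMap.range Flin : Set (lp (fun _ : ℕ => ℂ) 2)) := by
    ext z
    constructor
    · rintro ⟨w, ⟨x, rfl⟩, rfl⟩
      exact ⟨x, rfl⟩
    · rintro ⟨x, rfl⟩
      exact ⟨j x, ⟨x, rfl⟩, rfl⟩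
  have hjd : DenseRange j := by
    rw [denseRange_iff_closure_range, Set.eq_univ_iff_forall]
    intro y
    rw [closure_subtype, himg, ← Submodule.topologicalClosure_coe]
    exact y.2
  have hsepH : TopologicalSpace.SeparableSpace ↥S := hjd.separableSpace j.continuous
  have hjnorm : ∀ x : B, ‖j x‖ ≤ ‖x‖ := fun x => hnorm x
  have hjinj : Function.Injective j := by
    intro x y hxy
    have h0 : (j x : lp (fun _ : ℕ => ℂ) 2) = (j y : lp (fun _ : ℕ => ℂ) 2) :=
      congrArg Subtype.val hxy
    have hxy' : Flin x = Flin y := h0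
    have hcomp : ∀ n : ℕ, f n x = f n y := by
      intro n
      have h1 := congrFun (congrArg Subtype.val hxy') n
      have h2 : ((2:ℂ)⁻¹ ^ (n+1)) ≠ 0 := pow_ne_zero _ (by norm_num)
      exact mul_left_cancel₀ h2 h1
    have hz : x - y = 0 := hsep _ (fun n => by rw [map_sub, hcomp n, sub_self])
    exact sub_eq_zero.mp hz
  first
  | exact hsepH
  | exact ⟨j, hjinj, hjd, hjnorm⟩
  }
end

section
/- Fix p with 1 ≤ p ≤ ∞. For every f ∈ Lᵖ(ℝⁿ) (with respect to Lebesgue measure), f is integrable on each cube B_k and Σ_{k=1}^∞ t_k · |∫_{B_k} f(x) dx|² ≤ ‖f‖_{Lᵖ}². (The KS²-norm of f is dominated by its Lᵖ-norm: the embedding Lᵖ(ℝⁿ) → KS²(ℝⁿ) is continuous.) -/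
open MeasureTheory
open scoped ENNReal

/-- The closed cube in `ℝⁿ` with sides parallel to the coordinate axes, center `c`, and
diagonal `2⁻ˡ` (so half-side `2⁻ˡ / (2 √n)`). -/
def rationalCube (n : ℕ) (c : Fin n → ℝ) (l : ℕ) : Set (Fin n → ℝ) :=
  {x | ∀ i, |x i - c i| ≤ (2 : ℝ) ^ (-(l : ℤ)) / (2 * Real.sqrt n)}

lemma rationalCube_eq_pi (n : ℕ) (c : Fin n → ℝ) (l : ℕ) :
    rationalCube n c l = Set.pi Set.univ (fun i => Set.Icc
      (c i - (2 : ℝ) ^ (-(l : ℤ)) / (2 * Real.sqrt n))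
      (c i + (2 : ℝ) ^ (-(l : ℤ)) / (2 * Real.sqrt n))) := by
  ext x
  simp only [rationalCube, Set.mem_setOf_eq, Set.mem_pi, Set.mem_univ, forall_true_left,
    Set.mem_Icc, abs_le]
  constructor <;> intro h i <;> have := h i <;> constructor <;> linarith [this.1, this.2]

lemma volume_rationalCube_le (n : ℕ) (c : Fin n → ℝ) (l : ℕ) :
    volume (rationalCube n c l) ≤ 1 := by
  rw [rationalCube_eq_pi, volume_pi_pi]
  calc ∏ i : Fin n, volume (Set.Icc (c i - (2:ℝ)^(-(l:ℤ))/(2*Real.sqrt n))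
        (c i + (2:ℝ)^(-(l:ℤ))/(2*Real.sqrt n))) ≤ ∏ _i : Fin n, 1 := by
        refine Finset.prod_le_prod' ?_
        intro i _
        rw [Real.volume_Icc]
        have hn : (1:ℝ) ≤ Real.sqrt n := by
          have : (1:ℝ) ≤ (n:ℝ) := by exact_mod_cast i.pos
          simpa using Real.one_le_sqrt.mpr this
        have h2 : (2:ℝ)^(-(l:ℤ)) ≤ 1 := by
          apply zpow_le_one_of_nonpos₀ (by norm_num) (by simp)
        have hpos : (0:ℝ) < 2 * Real.sqrt n := by linarith
        have : c i + (2:ℝ)^(-(l:ℤ))/(2*Real.sqrt n) - (c i - (2:ℝ)^(-(l:ℤ))/(2*Real.sqrt n))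
            = 2 * ((2:ℝ)^(-(l:ℤ))/(2*Real.sqrt n)) := by ring
        rw [this]
        refine ENNReal.ofReal_le_one.mpr ?_
        have hs : (0:ℝ) < Real.sqrt n := by linarith
        rw [show 2 * ((2:ℝ)^(-(l:ℤ))/(2*Real.sqrt n)) = (2:ℝ)^(-(l:ℤ))/Real.sqrt n from by
          field_simp]
        exact (div_le_one hs).mpr (le_trans h2 hn)
      _ = 1 := by simp

/-- **Continuity of the embedding `Lᵖ(ℝⁿ) → KS²(ℝⁿ)`.** Let `(B_k)` enumerate the closed
cubes with rational center and diagonal `2⁻ˡ`, and let `(t_k)` be positive reals summing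
to `1`. For `1 ≤ p ≤ ∞` and `f ∈ Lᵖ(ℝⁿ)`, `f` is integrable on each `B_k` and
`Σ_k t_k |∫_{B_k} f|² ≤ ‖f‖_{Lᵖ}²`. -/
theorem lp_to_KS2_continuous (n : ℕ) (K : ℕ → Set (Fin n → ℝ))
    (hK : ∀ k, ∃ (c : Fin n → ℝ) (l : ℕ),
      (∀ i, ∃ q : ℚ, c i = (q : ℝ)) ∧ K k = rationalCube n c l)
    (hK' : ∀ (c : Fin n → ℝ) (l : ℕ), (∀ i, ∃ q : ℚ, c i = (q : ℝ)) →
      ∃ k, K k = rationalCube n c l)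
    (t : ℕ → ℝ) (ht : ∀ k, 0 < t k) (htsum : HasSum t 1)
    (p : ℝ≥0∞) (hp : 1 ≤ p)
    (f : (Fin n → ℝ) → ℂ) (hf : MemLp f p volume) :
    (∀ k, IntegrableOn f (K k) volume) ∧
    ∑' k, t k * ‖∫ x in K k, f x‖ ^ 2 ≤ (eLpNorm f p volume).toReal ^ 2 := by
  set M := (eLpNorm f p volume).toReal with hM
  have hμ : ∀ k, volume (K k) ≤ 1 := by
    intro k
    obtain ⟨c, l, -, hkl⟩ := hK k
    rw [hkl]; exact volume_rationalCube_le n c l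
  have hfin : ∀ k, IsFiniteMeasure (volume.restrict (K k)) := fun k =>
    ⟨by rw [Measure.restrict_apply_univ]; exact lt_of_le_of_lt (hμ k) ENNReal.one_lt_top⟩
  have hint : ∀ k, IntegrableOn f (K k) volume := fun k => by
    have := hfin k
    exact (hf.restrict (K k)).integrable hp
  refine ⟨hint, ?_⟩
  have hexp : 0 ≤ 1 - 1 / p.toReal := by
    rcases eq_or_ne p ∞ with h | h
    · simp [h]
    · have h1 : (1 : ℝ) ≤ p.toReal := by
        have := ENNReal.toReal_mono h hp
        simpa using this
      have : 1 / p.toReal ≤ 1 := by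
        rw [div_le_one (by linarith)]; linarith
      linarith
  have key : ∀ k, ‖∫ x in K k, f x‖ ≤ M := by
    intro k
    calc ‖∫ x in K k, f x‖ ≤ ∫ x in K k, ‖f x‖ := norm_integral_le_integral_norm f
      _ = (eLpNorm f 1 (volume.restrict (K k))).toReal := by
          rw [eLpNorm_one_eq_lintegral_enorm]
          exact integral_norm_eq_lintegral_enorm (hf.1.restrict)
      _ ≤ M := by
          apply ENNReal.toReal_mono hf.2.ne
          calc eLpNorm f 1 (volume.restrict (K k))
              ≤ eLpNorm f p (volume.restrict (K k)) *
                ((volume.restrict (K k)) Set.univ) ^ (1 / (1:ℝ≥0∞).toReal - 1 / p.toReal) :=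
                eLpNorm_le_eLpNorm_mul_rpow_measure_univ hp (hf.1.restrict)
            _ ≤ eLpNorm f p (volume.restrict (K k)) * 1 := by
                gcongr
                apply ENNReal.rpow_le_one
                · rw [Measure.restrict_apply_univ]; exact hμ k
                · simpa using hexp
            _ ≤ eLpNorm f p volume := by
                rw [mul_one]
                exact eLpNorm_mono_measure f Measure.restrict_le_self
  have hM0 : 0 ≤ M := ENNReal.toReal_nonneg
  have hle : ∀ k, t k * ‖∫ x in K k, f x‖ ^ 2 ≤ t k * M ^ 2 := fun k =>
    mul_le_mul_of_nonneg_left (pow_le_pow_left₀ (norm_nonneg _) (key k) 2) (ht k).le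
  have hsum2 : Summable (fun k => t k * M ^ 2) := htsum.summable.mul_right _
  have hsum1 : Summable (fun k => t k * ‖∫ x in K k, f x‖ ^ 2) :=
    hsum2.of_nonneg_of_le (fun k => mul_nonneg (ht k).le (sq_nonneg _)) hle
  calc ∑' k, t k * ‖∫ x in K k, f x‖ ^ 2 ≤ ∑' k, t k * M ^ 2 := Summable.tsum_le_tsum hle hsum1 hsum2
    _ = M ^ 2 := by rw [tsum_mul_right, htsum.tsum_eq, one_mul]
end

section
/- If μ(B_k) = 0 for every cube B_k of the family, then μ = 0. Moreover, Σ_{k=1}^∞ t_k · |μ(B_k)|² ≤ ‖μ‖², where ‖μ‖ is the total variation norm of μ. (The space of finite Borel measures on ℝⁿ embeds injectively and continuously into KS²(ℝⁿ).) -/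
open MeasureTheory

/-- The total variation norm of a finite complex Borel measure: the supremum of
`Σ_i ‖μ(E_i)‖` over all finite families of pairwise disjoint measurable sets. -/
noncomputable def totalVariationNorm {α : Type*} [MeasurableSpace α]
    (μ : ComplexMeasure α) : ℝ :=
  sSup {r : ℝ | ∃ (m : ℕ) (E : Fin m → Set α), (∀ i, MeasurableSet (E i)) ∧
    Pairwise (Function.onFun Disjoint E) ∧ r = ∑ i, ‖μ (E i)‖}

namespace KS2Proof

open Set

/-! ### Basic facts about the total variation measure of a complex measure -/

variable {α : Type*} [MeasurableSpace α]

instance (s : SignedMeasure α) : IsFiniteMeasure s.totalVariation := by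
  unfold SignedMeasure.totalVariation; infer_instance

/-- Domination of a signed measure by its total variation. -/
lemma abs_signed_le (s : SignedMeasure α) {E : Set α} (hE : MeasurableSet E) :
    |s E| ≤ (s.totalVariation E).toReal := by
  set J := s.toJordanDecomposition
  have hs : s E = (J.posPart E).toReal - (J.negPart E).toReal := by
    conv_lhs => rw [← s.toSignedMeasure_toJordanDecomposition]
    rw [JordanDecomposition.toSignedMeasure, Measure.toSignedMeasure_sub_apply hE]
    rfl
  rw [hs, SignedMeasure.totalVariation, Measure.add_apply,
    ENNReal.toReal_add (measure_ne_top _ _) (measure_ne_top _ _)]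
  have h1 : (0:ℝ) ≤ (J.posPart E).toReal := ENNReal.toReal_nonneg
  have h2 : (0:ℝ) ≤ (J.negPart E).toReal := ENNReal.toReal_nonneg
  rw [abs_sub_le_iff]; constructor <;> linarith

/-- The total variation measure of a complex measure. -/
noncomputable def tv (μ : ComplexMeasure α) : Measure α :=
  (ComplexMeasure.re μ).totalVariation + (ComplexMeasure.im μ).totalVariation

instance (μ : ComplexMeasure α) : IsFiniteMeasure (tv μ) := by
  unfold tv; infer_instance

lemma norm_le_tv (μ : ComplexMeasure α) {E : Set α} (hE : MeasurableSet E) :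
    ‖μ E‖ ≤ (tv μ E).toReal := by
  have h := Complex.norm_le_abs_re_add_abs_im (μ E)
  have h1 := abs_signed_le (ComplexMeasure.re μ) hE
  have h2 := abs_signed_le (ComplexMeasure.im μ) hE
  rw [ComplexMeasure.re_apply] at h1
  rw [ComplexMeasure.im_apply] at h2
  rw [tv, Measure.add_apply, ENNReal.toReal_add (measure_ne_top _ _) (measure_ne_top _ _)]
  calc ‖μ E‖ = ‖μ E‖ := rfl
    _ ≤ |(μ E).re| + |(μ E).im| := h
    _ ≤ _ := add_le_add h1 h2

lemma null_of_tv_null (μ : ComplexMeasure α) {E : Set α} (hE : tv μ E = 0) : μ E = 0 := by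
  rw [tv, Measure.add_apply, add_eq_zero] at hE
  have h1 := (ComplexMeasure.re μ).null_of_totalVariation_zero hE.1
  have h2 := (ComplexMeasure.im μ).null_of_totalVariation_zero hE.2
  rw [ComplexMeasure.re_apply] at h1
  rw [ComplexMeasure.im_apply] at h2
  exact Complex.ext h1 h2

/-! ### Geometry of the cubes -/

/-- Half-side length of the cubes at level `l`. -/
noncomputable def rr (n l : ℕ) : ℝ := (2 : ℝ) ^ (-(l : ℤ)) / (2 * Real.sqrt n)

lemma rr_pos {n : ℕ} (hn : 0 < n) (l : ℕ) : 0 < rr n l := by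
  have h1 : (0:ℝ) < Real.sqrt n := Real.sqrt_pos.mpr (by exact_mod_cast hn)
  have h2 : (0:ℝ) < (2 : ℝ) ^ (-(l : ℤ)) := by positivity
  exact div_pos h2 (by linarith)

lemma rationalCube_eq (n : ℕ) (c : Fin n → ℝ) (l : ℕ) :
    rationalCube n c l = {x | ∀ i, |x i - c i| ≤ rr n l} := rfl

lemma measurableSet_pi_forall {n : ℕ} (p : Fin n → ℝ → Prop)
    (h : ∀ i, MeasurableSet {a : ℝ | p i a}) :
    MeasurableSet {x : Fin n → ℝ | ∀ i, p i (x i)} := by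
  have : {x : Fin n → ℝ | ∀ i, p i (x i)} = ⋂ i, (fun x : Fin n → ℝ => x i) ⁻¹' {a | p i a} := by
    ext x; simp
  rw [this]
  exact MeasurableSet.iInter fun i => (measurable_pi_apply i) (h i)

lemma measurableSet_rationalCube {n : ℕ} (c : Fin n → ℝ) (l : ℕ) :
    MeasurableSet (rationalCube n c l) := by
  rw [rationalCube_eq]
  exact measurableSet_pi_forall _ fun i =>
    measurableSet_le (measurable_id.sub measurable_const).abs measurable_const

/-- Side length of the cubes at level `l`. -/
noncomputable def ss (n l : ℕ) : ℝ := 2 * rr n l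

lemma ss_pos {n : ℕ} (hn : 0 < n) (l : ℕ) : 0 < ss n l := by
  have := rr_pos hn l; unfold ss; linarith

lemma ss_eq (n l : ℕ) : ss n l = (2 : ℝ) ^ (-(l : ℤ)) / Real.sqrt n := by
  unfold ss rr
  rcases Nat.eq_zero_or_pos n with h | h
  · subst h; simp
  · have hsq : Real.sqrt n ≠ 0 := ne_of_gt (Real.sqrt_pos.mpr (by exact_mod_cast h))
    field_simp

lemma ss_scale {n : ℕ} (l l' : ℕ) (h : l ≤ l') : ss n l = 2 ^ (l' - l) * ss n l' := by
  rw [ss_eq, ss_eq, ← mul_div_assoc]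
  congr 1
  have : ((l' - l : ℕ) : ℤ) = (l' : ℤ) - l := by
    push_cast [Nat.cast_sub h]; ring
  rw [← zpow_natCast (2:ℝ) (l' - l), this, ← zpow_add₀ (two_ne_zero)]
  congr 1
  ring

/-! ### The key continuity lemma: extending vanishing on rational cubes to generic cubes -/

lemma cube_zero_extend {n : ℕ} (hn : 0 < n) (μ : ComplexMeasure (Fin n → ℝ))
    (τ : Measure (Fin n → ℝ)) [IsFiniteMeasure τ]
    (hτnorm : ∀ {E : Set (Fin n → ℝ)}, MeasurableSet E → ‖μ E‖ ≤ (τ E).toReal)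
    (l : ℕ)
    (hz : ∀ c : Fin n → ℝ, (∀ i, ∃ q : ℚ, c i = (q:ℝ)) → μ (rationalCube n c l) = 0)
    (c : Fin n → ℝ)
    (hc : ∀ i, τ {x : Fin n → ℝ | x i = c i + rr n l} = 0 ∧
      τ {x : Fin n → ℝ | x i = c i - rr n l} = 0) :
    μ (rationalCube n c l) = 0 := by
  set r := rr n l with hr
  have hrpos : 0 < r := rr_pos hn l
  set δ : ℕ → ℝ := fun j => 1 / (j + 1) with hδ
  have hδpos : ∀ j, 0 < δ j := fun j => by positivity
  have hδanti : ∀ {j j' : ℕ}, j ≤ j' → δ j' ≤ δ j := by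
    intro j j' h
    have h1 : (j:ℝ) + 1 ≤ (j':ℝ) + 1 := by exact_mod_cast Nat.succ_le_succ h
    exact one_div_le_one_div_of_le (by positivity) h1
  set shell : ℕ → Set (Fin n → ℝ) :=
    fun j => {x | (∀ i, |x i - c i| ≤ r + δ j) ∧ ¬(∀ i, |x i - c i| < r - δ j)} with hshell
  have hmeas_shell : ∀ j, MeasurableSet (shell j) := by
    intro j
    apply MeasurableSet.inter
    · exact measurableSet_pi_forall (fun i a => |a - c i| ≤ r + δ j) fun i =>
        measurableSet_le (measurable_id.sub measurable_const).abs measurable_const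
    · exact (measurableSet_pi_forall (fun i a => |a - c i| < r - δ j) fun i =>
        measurableSet_lt (measurable_id.sub measurable_const).abs measurable_const).compl
  have hanti : Antitone shell := by
    intro j j' h x hx
    obtain ⟨h1, h2⟩ := hx
    refine ⟨fun i => (h1 i).trans (by linarith [hδanti h]), fun hcon => h2 fun i => ?_⟩
    have := hcon i
    linarith [hδanti h]
  have hinter : (⋂ j, shell j) ⊆
      ⋃ i, ({x : Fin n → ℝ | x i = c i + r} ∪ {x | x i = c i - r}) := by
    intro x hx
    simp only [mem_iInter] at hx
    have hle : ∀ i, |x i - c i| ≤ r := by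
      intro i
      refine le_of_forall_pos_le_add fun ε hε => ?_
      obtain ⟨j, hj⟩ := exists_nat_one_div_lt hε
      exact ((hx j).1 i).trans (by simp only [hδ]; linarith)
    obtain ⟨i₀, -, hmax⟩ := Finset.exists_max_image Finset.univ
      (fun i => |x i - c i|) ⟨⟨0, hn⟩, Finset.mem_univ _⟩
    have heq : |x i₀ - c i₀| = r := by
      refine le_antisymm (hle i₀) ?_
      by_contra hlt
      push_neg at hlt
      obtain ⟨j, hj⟩ := exists_nat_one_div_lt (show (0:ℝ) < r - |x i₀ - c i₀| by linarith)
      have h2 := (hx j).2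
      push_neg at h2
      obtain ⟨i, hi⟩ := h2
      have hm := hmax i (Finset.mem_univ i)
      simp only [hδ] at hj hi
      linarith
    rcases (abs_eq hrpos.le).mp heq with h | h
    · exact mem_iUnion.mpr ⟨i₀, Or.inl (show x i₀ = c i₀ + r by linarith)⟩
    · exact mem_iUnion.mpr ⟨i₀, Or.inr (show x i₀ = c i₀ - r by linarith)⟩
  have hnull : τ (⋂ j, shell j) = 0 := by
    refine measure_mono_null hinter (measure_iUnion_null fun i => ?_)
    exact measure_union_null (hc i).1 (hc i).2
  have htend : Filter.Tendsto (fun j => τ (shell j)) Filter.atTop (nhds 0) := by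
    have := tendsto_measure_iInter_atTop (μ := τ)
      (fun j => (hmeas_shell j).nullMeasurableSet) hanti ⟨0, measure_ne_top _ _⟩
    rwa [hnull] at this
  have htendR : Filter.Tendsto (fun j => (τ (shell j)).toReal) Filter.atTop (nhds 0) := by
    have h0 : (0:ℝ) = (0:ENNReal).toReal := by simp
    rw [h0]
    exact (ENNReal.tendsto_toReal (by simp)).comp htend
  have hcq : ∀ j : ℕ, ∃ cq : Fin n → ℝ, (∀ i, ∃ q : ℚ, cq i = (q:ℝ)) ∧
      ∀ i, |cq i - c i| ≤ δ j := by
    intro j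
    have h : ∀ i : Fin n, ∃ y : ℝ, (∃ q : ℚ, y = (q:ℝ)) ∧ |y - c i| ≤ δ j := by
      intro i
      obtain ⟨q, hq⟩ := exists_rat_near (c i) (hδpos j)
      exact ⟨(q:ℝ), ⟨q, rfl⟩, by rw [abs_sub_comm]; linarith⟩
    choose cq h1 h2 using h
    exact ⟨cq, h1, h2⟩
  have key : ∀ j, ‖μ (rationalCube n c l)‖ ≤ 2 * (τ (shell j)).toReal := by
    intro j
    obtain ⟨cq, hcq1, hcq2⟩ := hcq j
    set A := rationalCube n c l with hA
    set B := rationalCube n cq l with hB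
    have hAm : MeasurableSet A := measurableSet_rationalCube c l
    have hBm : MeasurableSet B := measurableSet_rationalCube cq l
    have hB0 : μ B = 0 := hz cq hcq1
    have hABshell : A \ B ⊆ shell j := by
      rintro x ⟨hxA, hxB⟩
      rw [hA, rationalCube_eq] at hxA
      refine ⟨fun i => (hxA i).trans (by linarith [hδpos j]), fun hcon => hxB ?_⟩
      rw [hB, rationalCube_eq]
      intro i
      have h1 := hcon i
      have h2 := hcq2 i
      have h3 : |x i - cq i| ≤ |x i - c i| + |cq i - c i| := by
        calc |x i - cq i| = |(x i - c i) - (cq i - c i)| := by congr 1; ring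
          _ ≤ |x i - c i| + |cq i - c i| := abs_sub _ _
      linarith
    have hBAshell : B \ A ⊆ shell j := by
      rintro x ⟨hxB, hxA⟩
      rw [hB, rationalCube_eq] at hxB
      rw [hA, rationalCube_eq] at hxA
      simp only [mem_setOf_eq, not_forall, not_le] at hxA
      obtain ⟨i, hi⟩ := hxA
      constructor
      · intro i'
        have h1 := hxB i'
        have h2 := hcq2 i'
        calc |x i' - c i'| = |(x i' - cq i') + (cq i' - c i')| := by congr 1; ring
          _ ≤ |x i' - cq i'| + |cq i' - c i'| := abs_add_le _ _
          _ ≤ r + δ j := add_le_add h1 h2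
      · intro hcon
        have := hcon i
        linarith [hδpos j]
    have e1 : μ A = μ (A ∩ B) + μ (A \ B) := by
      conv_lhs => rw [← inter_union_diff A B]
      exact VectorMeasure.of_union (disjoint_sdiff_right.mono_left inter_subset_right)
        (hAm.inter hBm) (hAm.diff hBm)
    have e2 : μ B = μ (A ∩ B) + μ (B \ A) := by
      conv_lhs => rw [← inter_union_diff B A]
      rw [inter_comm B A]
      exact VectorMeasure.of_union (disjoint_sdiff_right.mono_left inter_subset_left)
        (hAm.inter hBm) (hBm.diff hAm)
    have hμA : μ A = μ (A \ B) - μ (B \ A) := by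
      have : μ A - μ B = μ (A \ B) - μ (B \ A) := by rw [e1, e2]; ring
      rw [hB0, sub_zero] at this
      exact this
    calc ‖μ A‖ = ‖μ (A \ B) - μ (B \ A)‖ := by rw [hμA]
      _ ≤ ‖μ (A \ B)‖ + ‖μ (B \ A)‖ := norm_sub_le _ _
      _ ≤ (τ (A \ B)).toReal + (τ (B \ A)).toReal :=
          add_le_add (hτnorm (hAm.diff hBm)) (hτnorm (hBm.diff hAm))
      _ ≤ (τ (shell j)).toReal + (τ (shell j)).toReal := by
          have g1 : (τ (A \ B)).toReal ≤ (τ (shell j)).toReal :=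
            ENNReal.toReal_mono (measure_ne_top _ _) (measure_mono hABshell)
          have g2 : (τ (B \ A)).toReal ≤ (τ (shell j)).toReal :=
            ENNReal.toReal_mono (measure_ne_top _ _) (measure_mono hBAshell)
          linarith
      _ = 2 * (τ (shell j)).toReal := by ring
  have h2tend : Filter.Tendsto (fun j => 2 * (τ (shell j)).toReal) Filter.atTop (nhds 0) := by
    simpa using htendR.const_mul 2
  have hle0 : ‖μ (rationalCube n c l)‖ ≤ 0 := ge_of_tendsto' h2tend key
  exact norm_eq_zero.mp (le_antisymm hle0 (norm_nonneg _))

/-! ### The dyadic-like grid of half-open cells -/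

def cell (n : ℕ) (o : Fin n → ℝ) (l : ℕ) (m : Fin n → ℤ) : Set (Fin n → ℝ) :=
  {x | ∀ i, x i ∈ Ico (o i + ss n l * m i) (o i + ss n l * (m i + 1))}

lemma Ico_nested {o s s' : ℝ} (hs' : 0 < s') {d : ℕ} (hss : s = 2 ^ d * s') {k k' : ℤ}
    (hne : (Ico (o + s * k) (o + s * (k + 1)) ∩ Ico (o + s' * k') (o + s' * (k' + 1))).Nonempty) :
    Ico (o + s' * k') (o + s' * (k' + 1)) ⊆ Ico (o + s * k) (o + s * (k + 1)) := by
  obtain ⟨x, ⟨ha, hb⟩, ⟨ha', hb'⟩⟩ := hne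
  have hd : (0:ℝ) < 2 ^ d := by positivity
  have hcast : ∀ a : ℤ, ((2 ^ d * a : ℤ) : ℝ) = 2 ^ d * (a : ℝ) := by intro a; push_cast; ring
  have hA : (2 ^ d * k : ℤ) ≤ k' := by
    have h1 : s' * ((2 ^ d * k : ℤ) : ℝ) ≤ x - o := by
      rw [hcast]; calc s' * (2 ^ d * (k:ℝ)) = s * k := by rw [hss]; ring
        _ ≤ x - o := by linarith
    have h2 : x - o < s' * ((k' : ℝ) + 1) := by linarith
    have h3 : ((2 ^ d * k : ℤ) : ℝ) < (k' : ℝ) + 1 := (mul_lt_mul_iff_right₀ hs').mp (h1.trans_lt h2)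
    have h4 : ((2 ^ d * k : ℤ) : ℝ) < ((k' + 1 : ℤ) : ℝ) := by push_cast; push_cast at h3; linarith
    exact Int.lt_add_one_iff.mp (by exact_mod_cast h4)
  have hB : k' + 1 ≤ 2 ^ d * (k + 1) := by
    have h1 : s' * (k' : ℝ) ≤ x - o := by linarith
    have h2 : x - o < s' * ((2 ^ d * (k + 1) : ℤ) : ℝ) := by
      rw [hcast]
      have : s * ((k:ℝ) + 1) = s' * (2 ^ d * ((k:ℝ) + 1)) := by rw [hss]; ring
      push_cast
      nlinarith
    have h3 : (k' : ℝ) < ((2 ^ d * (k + 1) : ℤ) : ℝ) := (mul_lt_mul_iff_right₀ hs').mp (h1.trans_lt h2)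
    exact Int.lt_iff_add_one_le.mp (by exact_mod_cast h3)
  intro y ⟨hy1, hy2⟩
  constructor
  · have e2 : s * (k:ℝ) = s' * ((2:ℝ) ^ d * k) := by rw [hss]; ring
    have hAk : ((2:ℝ) ^ d * (k:ℝ)) ≤ (k' : ℝ) := by
      have h : ((2 ^ d * k : ℤ) : ℝ) ≤ ((k' : ℤ) : ℝ) := by exact_mod_cast hA
      push_cast at h; linarith
    have := mul_le_mul_of_nonneg_left hAk hs'.le
    linarith
  · have hBk : ((k':ℝ) + 1) ≤ (2:ℝ) ^ d * ((k:ℝ) + 1) := by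
      have h : ((k' + 1 : ℤ) : ℝ) ≤ ((2 ^ d * (k + 1) : ℤ) : ℝ) := by exact_mod_cast hB
      push_cast at h; linarith
    have e3 : s * ((k:ℝ) + 1) = s' * ((2:ℝ) ^ d * ((k:ℝ)+1)) := by rw [hss]; ring
    have := mul_le_mul_of_nonneg_left hBk hs'.le
    linarith

lemma mem_cell_floor {n : ℕ} (hn : 0 < n) (o : Fin n → ℝ) (l : ℕ) (x : Fin n → ℝ) :
    x ∈ cell n o l (fun i => ⌊(x i - o i) / ss n l⌋) := by
  intro i
  have hs := ss_pos hn l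
  set s := ss n l
  set a := x i - o i
  constructor
  · have h1 : (⌊a / s⌋ : ℝ) ≤ a / s := Int.floor_le _
    have := mul_le_mul_of_nonneg_left h1 hs.le
    rw [mul_div_cancel₀ _ hs.ne'] at this
    simp only []
    linarith
  · have h2 : a / s < ⌊a / s⌋ + 1 := Int.lt_floor_add_one _
    have := mul_lt_mul_of_pos_left h2 hs
    rw [mul_div_cancel₀ _ hs.ne'] at this
    simp only []
    linarith

lemma cell_nested {n : ℕ} (hn : 0 < n) (o : Fin n → ℝ) {l l' : ℕ} (hll : l ≤ l')
    {m m' : Fin n → ℤ} (hne : (cell n o l m ∩ cell n o l' m').Nonempty) :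
    cell n o l' m' ⊆ cell n o l m := by
  obtain ⟨x, hx1, hx2⟩ := hne
  intro y hy i
  exact Ico_nested (ss_pos hn l') (ss_scale l l' hll (n := n)) ⟨x i, hx1 i, hx2 i⟩ (hy i)

lemma isPiSystem_cells {n : ℕ} (hn : 0 < n) (o : Fin n → ℝ) :
    IsPiSystem {C : Set (Fin n → ℝ) | ∃ l m, C = cell n o l m} := by
  rintro A ⟨l, m, rfl⟩ B ⟨l', m', rfl⟩ hAB
  rcases le_total l l' with h | h
  · have hsub := cell_nested hn o h hAB
    rw [inter_eq_self_of_subset_right hsub]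
    exact ⟨l', m', rfl⟩
  · have hsub := cell_nested hn o h (hAB.mono (inter_comm _ _).le)
    rw [inter_eq_self_of_subset_left hsub]
    exact ⟨l, m, rfl⟩

lemma measurableSet_cell {n : ℕ} (o : Fin n → ℝ) (l : ℕ) (m : Fin n → ℤ) :
    MeasurableSet (cell n o l m) := by
  have : cell n o l m = ⋂ i, (fun x : Fin n → ℝ => x i) ⁻¹'
      (Ico (o i + ss n l * m i) (o i + ss n l * (m i + 1))) := by
    ext x; simp [cell]
  rw [this]
  exact MeasurableSet.iInter fun i => (measurable_pi_apply i) measurableSet_Ico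

lemma countable_cells {n : ℕ} (o : Fin n → ℝ) :
    {C : Set (Fin n → ℝ) | ∃ l m, C = cell n o l m}.Countable := by
  have : {C : Set (Fin n → ℝ) | ∃ l m, C = cell n o l m} =
      range (fun p : ℕ × (Fin n → ℤ) => cell n o p.1 p.2) := by
    ext C; simp [eq_comm]
  rw [this]
  exact countable_range _

lemma exists_small_ss {n : ℕ} (hn : 0 < n) {ε : ℝ} (hε : 0 < ε) : ∃ l : ℕ, ss n l < ε := by
  have hsq : (0:ℝ) < Real.sqrt n := Real.sqrt_pos.mpr (by exact_mod_cast hn)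
  obtain ⟨l, hl⟩ := exists_pow_lt_of_lt_one (mul_pos hε hsq) (by norm_num : (1:ℝ)/2 < 1)
  refine ⟨l, ?_⟩
  rw [ss_eq]
  have h2 : (2:ℝ) ^ (-(l:ℤ)) = (1/2) ^ l := by
    rw [one_div, inv_pow, ← zpow_natCast (2:ℝ) l, ← zpow_neg]
  rw [h2, div_lt_iff₀ hsq]
  linarith

lemma generateFrom_cells {n : ℕ} (hn : 0 < n) (o : Fin n → ℝ) :
    (inferInstance : MeasurableSpace (Fin n → ℝ)) =
      MeasurableSpace.generateFrom {C : Set (Fin n → ℝ) | ∃ l m, C = cell n o l m} := by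
  set S := {C : Set (Fin n → ℝ) | ∃ l m, C = cell n o l m} with hS
  refine le_antisymm ?_ (MeasurableSpace.generateFrom_le ?_)
  · rw [BorelSpace.measurable_eq (α := Fin n → ℝ), borel]
    refine MeasurableSpace.generateFrom_le fun U hU => ?_
    have hUeq : U = ⋃₀ {C ∈ S | C ⊆ U} := by
      apply Subset.antisymm
      · intro x hx
        obtain ⟨ε, hε, hball⟩ := Metric.isOpen_iff.mp (by exact hU) x hx
        obtain ⟨l, hl⟩ := exists_small_ss hn hε
        set m := fun i => ⌊(x i - o i) / ss n l⌋
        refine ⟨cell n o l m, ⟨⟨l, m, rfl⟩, ?_⟩, mem_cell_floor hn o l x⟩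
        intro y hy
        apply hball
        rw [Metric.mem_ball, dist_pi_lt_iff hε]
        intro i
        have h1 := hy i
        have h2 := mem_cell_floor hn o l x i
        rw [Real.dist_eq]
        simp only [mem_Ico] at h1 h2
        rw [abs_lt]
        constructor <;> [linarith [h1.1, h2.2]; linarith [h1.2, h2.1]]
      · exact sUnion_subset fun C hC => hC.2
    rw [hUeq]
    refine MeasurableSet.sUnion (((countable_cells o).mono (sep_subset _ _))) fun C hC =>
      MeasurableSpace.measurableSet_generateFrom hC.1
  · rintro C ⟨l, m, rfl⟩
    exact measurableSet_cell o l m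

lemma exists_good_offset {n : ℕ} (τ : Measure (Fin n → ℝ)) [IsFiniteMeasure τ] :
    ∃ o : Fin n → ℝ, ∀ (i : Fin n) (l : ℕ) (m : ℤ),
      τ {x : Fin n → ℝ | x i = o i + ss n l * m} = 0 := by
  have key : ∀ i : Fin n, ∃ a : ℝ, ∀ (l : ℕ) (m : ℤ),
      τ {x : Fin n → ℝ | x i = a + ss n l * m} = 0 := by
    intro i
    set Bad := {a : ℝ | τ {x : Fin n → ℝ | x i = a} ≠ 0} with hBad
    have hBadc : Bad.Countable := by
      have h := Measure.countable_meas_pos_of_disjoint_iUnion (μ := τ)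
        (As := fun a : ℝ => {x : Fin n → ℝ | x i = a})
        (fun a => by
          have : {x : Fin n → ℝ | x i = a} = (fun x : Fin n → ℝ => x i) ⁻¹' {a} := by
            ext y; simp
          show MeasurableSet {x : Fin n → ℝ | x i = a}
          exact this ▸ (measurable_pi_apply i) (measurableSet_singleton a))
        (fun a b hab => by
          simp only [Function.onFun]
          rw [Set.disjoint_left]
          rintro x hx1 hx2
          exact hab (hx1.symm.trans hx2))
      refine h.mono fun a ha => ?_
      exact pos_iff_ne_zero.mpr ha
    set BigBad := ⋃ (l : ℕ), ⋃ (m : ℤ), (fun a : ℝ => a + ss n l * m) ⁻¹' Bad with hBB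
    have hBBc : BigBad.Countable := by
      refine countable_iUnion fun l => countable_iUnion fun m => ?_
      exact Set.Countable.preimage hBadc (add_left_injective _)
    obtain ⟨a, ha⟩ := (Set.ne_univ_iff_exists_notMem _).mp
      (by intro h; exact (Set.not_countable_univ) (h ▸ hBBc) : BigBad ≠ univ)
    refine ⟨a, fun l m => ?_⟩
    by_contra hne
    exact ha (mem_iUnion.mpr ⟨l, mem_iUnion.mpr ⟨m, hne⟩⟩)
  choose o ho using key
  exact ⟨o, ho⟩

/-! ### A signed measure vanishing on the cells vanishes -/

lemma signed_zero {β : Type*} [inst : MeasurableSpace β] (s : SignedMeasure β)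
    (S : Set (Set β)) (hPi : IsPiSystem S)
    (hgen : inst = MeasurableSpace.generateFrom S)
    (B : ℕ → Set β) (hBmem : ∀ j, B j ∈ S) (hBU : ⋃ j, B j = univ)
    (hS0 : ∀ C ∈ S, s C = 0) : s = 0 := by
  set J := s.toJordanDecomposition with hJ
  have hmeas : ∀ C ∈ S, MeasurableSet C := by
    intro C hC
    rw [hgen]
    exact MeasurableSpace.measurableSet_generateFrom hC
  have hPN : ∀ C ∈ S, J.posPart C = J.negPart C := by
    intro C hC
    have hrep : s C = (J.posPart C).toReal - (J.negPart C).toReal := by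
      conv_lhs => rw [← s.toSignedMeasure_toJordanDecomposition]
      rw [JordanDecomposition.toSignedMeasure, Measure.toSignedMeasure_sub_apply (hmeas C hC)]
      rfl
    have h0 := hS0 C hC
    rw [h0] at hrep
    have : (J.posPart C).toReal = (J.negPart C).toReal := by linarith
    exact (ENNReal.toReal_eq_toReal_iff' (measure_ne_top _ _) (measure_ne_top _ _)).mp this
  have hPN' : J.posPart = J.negPart :=
    Measure.ext_of_generateFrom_of_iUnion S B hgen hPi hBU hBmem
      (fun j => measure_ne_top _ _) hPN
  have heq : J.posPart.toSignedMeasure = J.negPart.toSignedMeasure := by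
    ext E hE
    rw [Measure.toSignedMeasure_apply_measurable hE, Measure.toSignedMeasure_apply_measurable hE,
      hPN']
  rw [← s.toSignedMeasure_toJordanDecomposition, JordanDecomposition.toSignedMeasure, ← hJ, heq,
    sub_self]

/-! ### Injectivity, positive-dimension case -/

lemma part1_pos {n : ℕ} (hn : 0 < n) (μ : ComplexMeasure (Fin n → ℝ))
    (hz : ∀ (l : ℕ) (c : Fin n → ℝ), (∀ i, ∃ q : ℚ, c i = (q:ℝ)) →
      μ (rationalCube n c l) = 0) :
    μ = 0 := by
  set τ := tv μ with hτ
  have hτnorm : ∀ {E : Set (Fin n → ℝ)}, MeasurableSet E → ‖μ E‖ ≤ (τ E).toReal :=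
    fun hE => norm_le_tv μ hE
  obtain ⟨o, ho⟩ := exists_good_offset (n := n) τ
  have hsr : ∀ l, ss n l = 2 * rr n l := fun l => rfl
  -- the closed grid cubes are null
  have hclosed : ∀ (l : ℕ) (m : Fin n → ℤ),
      μ {x : Fin n → ℝ | ∀ i,
        o i + ss n l * m i ≤ x i ∧ x i ≤ o i + ss n l * (m i + 1)} = 0 := by
    intro l m
    set cc : Fin n → ℝ := fun i => o i + ss n l * m i + rr n l with hcc
    have hkey : rationalCube n cc l =
        {x | ∀ i, o i + ss n l * m i ≤ x i ∧ x i ≤ o i + ss n l * (m i + 1)} := by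
      rw [rationalCube_eq]
      ext x
      simp only [mem_setOf_eq]
      refine forall_congr' fun i => ?_
      rw [abs_le]
      have hs := hsr l
      have hm : ss n l * ((m i : ℝ) + 1) = ss n l * (m i : ℝ) + ss n l := by ring
      simp only [hcc]
      constructor
      · rintro ⟨h1, h2⟩
        constructor <;> push_cast <;> push_cast at h1 h2 <;> linarith
      · rintro ⟨h1, h2⟩
        constructor <;> push_cast <;> push_cast at h1 h2 <;> linarith
    rw [← hkey]
    apply cube_zero_extend hn μ τ hτnorm l (hz l) cc
    intro i
    constructor
    · have hconst : cc i + rr n l = o i + ss n l * ((m i + 1 : ℤ) : ℝ) := by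
        simp only [hcc]
        push_cast
        rw [hsr l]
        ring
      have : {x : Fin n → ℝ | x i = cc i + rr n l} =
          {x : Fin n → ℝ | x i = o i + ss n l * ((m i + 1 : ℤ) : ℝ)} := by rw [hconst]
      rw [this]
      exact ho i l (m i + 1)
    · have hconst : cc i - rr n l = o i + ss n l * ((m i : ℤ) : ℝ) := by
        simp only [hcc]
        push_cast
        rw [hsr l]
        ring
      have : {x : Fin n → ℝ | x i = cc i - rr n l} =
          {x : Fin n → ℝ | x i = o i + ss n l * ((m i : ℤ) : ℝ)} := by rw [hconst]
      rw [this]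
      exact ho i l (m i)
  -- the half-open cells are null
  have hcellnull : ∀ (l : ℕ) (m : Fin n → ℤ), μ (cell n o l m) = 0 := by
    intro l m
    set Cl := {x : Fin n → ℝ | ∀ i,
      o i + ss n l * m i ≤ x i ∧ x i ≤ o i + ss n l * (m i + 1)} with hCl
    have hClm : MeasurableSet Cl :=
      measurableSet_pi_forall
        (fun i a => o i + ss n l * m i ≤ a ∧ a ≤ o i + ss n l * (m i + 1))
        (fun i => (measurableSet_le measurable_const measurable_id).inter
          (measurableSet_le measurable_id measurable_const))
    have hsub : cell n o l m ⊆ Cl := fun x hx i => ⟨(hx i).1, (hx i).2.le⟩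
    have hdiffsub : Cl \ cell n o l m ⊆
        ⋃ i, {x : Fin n → ℝ | x i = o i + ss n l * ((m i + 1 : ℤ) : ℝ)} := by
      rintro x ⟨hx1, hx2⟩
      simp only [cell, mem_setOf_eq, not_forall, mem_Ico, not_and, not_lt] at hx2
      obtain ⟨i, hi⟩ := hx2
      have h1 := (hx1 i).1
      have h2 := (hx1 i).2
      have h3 := hi h1
      refine mem_iUnion.mpr ⟨i, ?_⟩
      show x i = o i + ss n l * ((m i + 1 : ℤ) : ℝ)
      push_cast
      push_cast at h2 h3
      linarith
    have hdiffnull : τ (Cl \ cell n o l m) = 0 :=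
      measure_mono_null hdiffsub (measure_iUnion_null fun i => ho i l (m i + 1))
    have hμdiff : μ (Cl \ cell n o l m) = 0 := null_of_tv_null μ (hτ ▸ hdiffnull)
    have hadd := VectorMeasure.of_add_of_diff (v := μ) (measurableSet_cell o l m) hClm hsub
    rw [hμdiff, add_zero] at hadd
    rw [hadd]
    exact hclosed l m
  -- conclude via the π-system of cells
  have hcne : Nonempty (Fin n → ℤ) := ⟨fun _ => 0⟩
  obtain ⟨e, he⟩ := exists_surjective_nat (Fin n → ℤ)
  set S := {C : Set (Fin n → ℝ) | ∃ l m, C = cell n o l m} with hSdef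
  have hBU : ⋃ j, cell n o 0 (e j) = univ := by
    apply eq_univ_of_forall
    intro x
    obtain ⟨j, hj⟩ := he (fun i => ⌊(x i - o i) / ss n 0⌋)
    exact mem_iUnion.mpr ⟨j, hj ▸ mem_cell_floor hn o 0 x⟩
  have hS0re : ∀ C ∈ S, (ComplexMeasure.re μ) C = 0 := by
    rintro C ⟨l, m, rfl⟩
    show (μ (cell n o l m)).re = 0
    rw [hcellnull l m]
    rfl
  have hS0im : ∀ C ∈ S, (ComplexMeasure.im μ) C = 0 := by
    rintro C ⟨l, m, rfl⟩
    show (μ (cell n o l m)).im = 0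
    rw [hcellnull l m]
    rfl
  have hre : ComplexMeasure.re μ = 0 :=
    signed_zero _ S (isPiSystem_cells hn o) (generateFrom_cells hn o)
      (fun j => cell n o 0 (e j)) (fun j => ⟨0, e j, rfl⟩) hBU hS0re
  have him : ComplexMeasure.im μ = 0 :=
    signed_zero _ S (isPiSystem_cells hn o) (generateFrom_cells hn o)
      (fun j => cell n o 0 (e j)) (fun j => ⟨0, e j, rfl⟩) hBU hS0im
  ext E hE
  apply Complex.ext
  · rw [show (μ E).re = (ComplexMeasure.re μ) E from rfl, hre]
    simp
  · rw [show (μ E).im = (ComplexMeasure.im μ) E from rfl, him]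
    simp

/-! ### The norm inequality -/

lemma part2 {α : Type*} [MeasurableSpace α] (μ : ComplexMeasure α)
    (τ : Measure α) [IsFiniteMeasure τ]
    (hτ : ∀ {E : Set α}, MeasurableSet E → ‖μ E‖ ≤ (τ E).toReal)
    (K : ℕ → Set α) (hKm : ∀ k, MeasurableSet (K k))
    (t : ℕ → ℝ) (ht : ∀ k, 0 < t k) (htsum : HasSum t 1) :
    ∑' k, t k * ‖μ (K k)‖ ^ 2 ≤ totalVariationNorm μ ^ 2 := by
  set S := {r : ℝ | ∃ (m : ℕ) (E : Fin m → Set α), (∀ i, MeasurableSet (E i)) ∧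
    Pairwise (Function.onFun Disjoint E) ∧ r = ∑ i, ‖μ (E i)‖} with hS
  have hbdd : BddAbove S := by
    refine ⟨(τ univ).toReal, fun r hr => ?_⟩
    obtain ⟨m, E, hE, hdisj, rfl⟩ := hr
    calc ∑ i, ‖μ (E i)‖ ≤ ∑ i, (τ (E i)).toReal := Finset.sum_le_sum fun i _ => hτ (hE i)
      _ = (∑ i, τ (E i)).toReal := (ENNReal.toReal_sum fun i _ => measure_ne_top _ _).symm
      _ = (τ (⋃ i, E i)).toReal := by
          rw [measure_iUnion hdisj hE, tsum_fintype]
      _ ≤ (τ univ).toReal := by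
          exact ENNReal.toReal_mono (measure_ne_top _ _) (measure_mono (subset_univ _))
  have hmem : ∀ k, ‖μ (K k)‖ ∈ S := by
    intro k
    refine ⟨1, ![K k], fun i => ?_, ?_, ?_⟩
    · simpa using hKm k
    · intro i j hij; exact absurd (Subsingleton.elim i j) hij
    · simp
  have h0 : (0:ℝ) ∈ S := ⟨0, ![], fun i => i.elim0, by intro i; exact i.elim0, by simp⟩
  have hN0 : 0 ≤ totalVariationNorm μ := le_csSup hbdd h0
  have h1 : ∀ k, ‖μ (K k)‖ ≤ totalVariationNorm μ := fun k => le_csSup hbdd (hmem k)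
  have hpt : ∀ k, t k * ‖μ (K k)‖ ^ 2 ≤ t k * totalVariationNorm μ ^ 2 := fun k =>
    mul_le_mul_of_nonneg_left (pow_le_pow_left₀ (norm_nonneg _) (h1 k) 2) (ht k).le
  have hsum2 : Summable (fun k => t k * totalVariationNorm μ ^ 2) :=
    htsum.summable.mul_right _
  have hsum1 : Summable (fun k => t k * ‖μ (K k)‖ ^ 2) := by
    refine Summable.of_nonneg_of_le (fun k => ?_) hpt hsum2
    exact mul_nonneg (ht k).le (by positivity)
  calc ∑' k, t k * ‖μ (K k)‖ ^ 2 ≤ ∑' k, t k * totalVariationNorm μ ^ 2 :=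
        hsum1.tsum_le_tsum hpt hsum2
    _ = (∑' k, t k) * totalVariationNorm μ ^ 2 := tsum_mul_right
    _ = totalVariationNorm μ ^ 2 := by rw [htsum.tsum_eq, one_mul]

end KS2Proof

open KS2Proof in
/-- **The finite Borel measures embed injectively and continuously into `KS²(ℝⁿ)`.**
Let `(B_k)` enumerate the closed cubes with rational center and diagonal `2⁻ˡ`, and let
`(t_k)` be positive reals summing to `1`. If a finite complex Borel measure `μ` on `ℝⁿ`
satisfies `μ(B_k) = 0` for all `k`, then `μ = 0`; moreover
`Σ_k t_k |μ(B_k)|² ≤ ‖μ‖²`, where `‖μ‖` is the total variation norm of `μ`. -/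
theorem measures_to_KS2 (n : ℕ) (K : ℕ → Set (Fin n → ℝ))
    (hK : ∀ k, ∃ (c : Fin n → ℝ) (l : ℕ),
      (∀ i, ∃ q : ℚ, c i = (q : ℝ)) ∧ K k = rationalCube n c l)
    (hK' : ∀ (c : Fin n → ℝ) (l : ℕ), (∀ i, ∃ q : ℚ, c i = (q : ℝ)) →
      ∃ k, K k = rationalCube n c l)
    (t : ℕ → ℝ) (ht : ∀ k, 0 < t k) (htsum : HasSum t 1)
    (μ : ComplexMeasure (Fin n → ℝ)) :
    ((∀ k, μ (K k) = 0) → μ = 0) ∧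
    ∑' k, t k * ‖μ (K k)‖ ^ 2 ≤ totalVariationNorm μ ^ 2 := by
  constructor
  · intro h
    rcases Nat.eq_zero_or_pos n with hn0 | hn
    · subst hn0
      have huniv : rationalCube 0 (fun i => i.elim0) 0 = Set.univ :=
        Set.eq_univ_of_forall fun x i => i.elim0
      obtain ⟨k, hk⟩ := hK' (fun i => i.elim0) 0 (fun i => i.elim0)
      have hz : μ Set.univ = 0 := by rw [← huniv, ← hk]; exact h k
      ext E hE
      rcases E.eq_empty_or_nonempty with rfl | ⟨x, hx⟩
      · simp
      · have hEu : E = Set.univ := Set.eq_univ_of_forall fun y => by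
          rwa [Subsingleton.elim y x]
        rw [hEu, hz]
        rfl
    · exact part1_pos hn μ fun l c hc => by
        obtain ⟨k, hk⟩ := hK' c l hc
        rw [← hk]
        exact h k
  · have hKm : ∀ k, MeasurableSet (K k) := fun k => by
      obtain ⟨c, l, -, hk⟩ := hK k
      rw [hk]
      exact measurableSet_rationalCube c l
    exact part2 μ (tv μ) (fun {E} hE => norm_le_tv μ hE) K hKm t ht htsum
end

section
/- Every closed densely defined linear operator on a separable complex Hilbert space is of the first Baire class: if A is a linear operator on H with dense domain D(A) and closed graph, then there exists a sequence (A_m) of bounded linear operators on H such that A_m x → A x in H for every x ∈ D(A). -/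
open Filter Topology

noncomputable section ClosedBaireAux

namespace ClosedBaireAux

variable {H : Type*} [NormedAddCommGroup H] [InnerProductSpace ℂ H] [CompleteSpace H]

local notation "⟪" x ", " y "⟫" => @inner ℂ _ _ x y

/-- `H × H` with the `L²` (Hilbert) norm. -/
abbrev E2 (H : Type*) [NormedAddCommGroup H] : Type _ := WithLp 2 (H × H)

/-- The linear equivalence from `H × H` to its `L²` version. -/
def L (H : Type*) [NormedAddCommGroup H] [InnerProductSpace ℂ H] :
    (H × H) ≃ₗ[ℂ] E2 H := (WithLp.linearEquiv 2 ℂ (H × H)).symm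

@[simp] lemma L_fst (p : H × H) : (L H p).fst = p.1 := rfl
@[simp] lemma L_snd (p : H × H) : (L H p).snd = p.2 := rfl

/-- The graph of `c • A`, viewed inside `WithLp 2 (H × H)`. -/
def Kc (A : H →ₗ.[ℂ] H) (c : ℂ) : Submodule ℂ (E2 H) :=
  (A.graph.map ((LinearMap.id : H →ₗ[ℂ] H).prodMap (c • LinearMap.id))).comap
    (WithLp.linearEquiv 2 ℂ (H × H)).toLinearMap

lemma mem_Kc {A : H →ₗ.[ℂ] H} {c : ℂ} {q : E2 H} :
    q ∈ Kc A c ↔ ∃ x : A.domain, (x : H) = q.fst ∧ c • A x = q.snd := by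
  simp only [Kc, Submodule.mem_comap, Submodule.mem_map, LinearPMap.mem_graph_iff]
  constructor
  · rintro ⟨p, ⟨x, hx1, hx2⟩, hp⟩
    have hp' : ((p.1, c • p.2) : H × H) = (q.fst, q.snd) := hp
    exact ⟨x, by rw [hx1]; exact (Prod.ext_iff.mp hp').1,
      by rw [hx2]; exact (Prod.ext_iff.mp hp').2⟩
  · rintro ⟨x, hx1, hx2⟩
    refine ⟨((x : H), A x), ⟨x, rfl, rfl⟩, ?_⟩
    exact Prod.ext (by simpa using hx1) (by simpa using hx2)

lemma isClosed_Kc (A : H →ₗ.[ℂ] H) (hclosed : IsClosed (A.graph : Set (H × H)))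
    {c : ℂ} (hc : c ≠ 0) : IsClosed ((Kc A c : Submodule ℂ (E2 H)) : Set (E2 H)) := by
  have hset : ((Kc A c : Submodule ℂ (E2 H)) : Set (E2 H)) =
      (fun q : E2 H => ((q.fst, c⁻¹ • q.snd) : H × H)) ⁻¹' (A.graph : Set (H × H)) := by
    ext q
    simp only [Set.mem_preimage, SetLike.mem_coe, mem_Kc, LinearPMap.mem_graph_iff]
    constructor
    · rintro ⟨x, h1, h2⟩
      exact ⟨x, h1, by rw [← h2, smul_smul, inv_mul_cancel₀ hc, one_smul]⟩
    · rintro ⟨x, h1, h2⟩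
      exact ⟨x, h1, by rw [h2, smul_smul, mul_inv_cancel₀ hc, one_smul]⟩
  rw [hset]
  have hcont : Continuous (WithLp.equiv 2 (H × H)) := WithLp.prod_continuous_ofLp 2 H H
  exact hclosed.preimage ((continuous_fst.comp hcont).prodMk
    ((continuous_const_smul c⁻¹).comp (continuous_snd.comp hcont)))

lemma cm_ne_zero (m : ℕ) : ((m : ℂ) + 1)⁻¹ ≠ 0 := by
  apply inv_ne_zero
  have : ((m : ℂ) + 1) = ((m + 1 : ℕ) : ℂ) := by push_cast; ring
  rw [this]
  exact_mod_cast Nat.succ_ne_zero m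

/-- The map `q ↦ π₂ (P_m q)` where `P_m` is the orthogonal projection onto the graph of
`(m+1)⁻¹ • A`. -/
def sndQ (A : H →ₗ.[ℂ] H) (hclosed : IsClosed (A.graph : Set (H × H))) (m : ℕ) :
    E2 H →L[ℂ] H :=
  haveI : CompleteSpace (Kc A (((m : ℂ) + 1)⁻¹)) :=
    (isClosed_Kc A hclosed (cm_ne_zero m)).completeSpace_coe
  ContinuousLinearMap.snd ℂ H H ∘L
    (WithLp.prodContinuousLinearEquiv 2 ℂ H H).toContinuousLinearMap ∘L
    (Kc A (((m : ℂ) + 1)⁻¹)).subtypeL ∘L Submodule.orthogonalProjection (Kc A (((m : ℂ) + 1)⁻¹))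

lemma sndQ_apply (A : H →ₗ.[ℂ] H) (hclosed : IsClosed (A.graph : Set (H × H))) (m : ℕ)
    (q : E2 H) :
    haveI : CompleteSpace (Kc A (((m : ℂ) + 1)⁻¹)) :=
      (isClosed_Kc A hclosed (cm_ne_zero m)).completeSpace_coe
    sndQ A hclosed m q =
      ((Submodule.orthogonalProjection (Kc A (((m : ℂ) + 1)⁻¹)) q : E2 H)).snd := rfl

lemma norm_snd_le_E2 (q : E2 H) : ‖q.snd‖ ≤ ‖q‖ := by
  have h := WithLp.prod_norm_sq_eq_of_L2 q
  nlinarith [norm_nonneg q, norm_nonneg q.snd, norm_nonneg q.fst]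

lemma norm_sndQ_le (A : H →ₗ.[ℂ] H) (hclosed : IsClosed (A.graph : Set (H × H))) (m : ℕ)
    (q : E2 H) : ‖sndQ A hclosed m q‖ ≤ ‖q‖ := by
  haveI : CompleteSpace (Kc A (((m : ℂ) + 1)⁻¹)) :=
    (isClosed_Kc A hclosed (cm_ne_zero m)).completeSpace_coe
  rw [sndQ_apply]
  refine (norm_snd_le_E2 _).trans ?_
  have h1 : ‖Submodule.orthogonalProjection (Kc A (((m : ℂ) + 1)⁻¹)) q‖ ≤ 1 * ‖q‖ :=
    (Submodule.orthogonalProjection (Kc A (((m : ℂ) + 1)⁻¹))).le_of_opNorm_le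
      (Submodule.orthogonalProjectionOnto_norm_le (Kc A (((m : ℂ) + 1)⁻¹))) q
  simpa using h1

/-- Key estimate: for `y` in the domain of the adjoint, `‖π₂ P_m (0, y)‖ ≤ ‖A* y‖/(m+1)`. -/
lemma sndQ_bound (A : H →ₗ.[ℂ] H) (hclosed : IsClosed (A.graph : Set (H × H))) (m : ℕ)
    {y z : H} (hz : ∀ x : A.domain, ⟪y, A x⟫ = ⟪z, (x : H)⟫) :
    ‖sndQ A hclosed m (L H (0, y))‖ ≤ ‖z‖ / (m + 1) := by
  haveI : CompleteSpace (Kc A (((m : ℂ) + 1)⁻¹)) :=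
    (isClosed_Kc A hclosed (cm_ne_zero m)).completeSpace_coe
  set c : ℂ := ((m : ℂ) + 1)⁻¹ with hc
  set K := Kc A c
  set p : E2 H := (Submodule.orthogonalProjection K (L H (0, y)) : E2 H) with hp
  obtain ⟨x, hx1, hx2⟩ := mem_Kc.mp (Submodule.orthogonalProjection K (L H (0, y))).2
  -- orthogonality: ⟪p, (0,y) - p⟫ = 0
  have horth : ⟪p, L H (0, y) - p⟫ = 0 := by
    have hmem := Submodule.sub_starProjection_mem_orthogonal (K := K) (L H (0, y))
    exact (Submodule.mem_orthogonal K _).mp hmem p (Submodule.orthogonalProjection K (L H (0, y))).2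
  have hinner : ⟪p, L H (0, y)⟫ = (‖p‖ : ℂ) ^ 2 := by
    have := horth
    rw [inner_sub_right, sub_eq_zero] at this
    rw [this, inner_self_eq_norm_sq_to_K]
    norm_num
  -- expand the inner product
  have hexp : ⟪p, L H (0, y)⟫ = ⟪p.snd, y⟫ := by
    rw [WithLp.prod_inner_apply]
    simp
  have hAx : ⟪p.snd, y⟫ = starRingEnd ℂ c * ⟪(x : H), z⟫ := by
    rw [← hx2, inner_smul_left]
    congr 1
    rw [← inner_conj_symm, hz x, inner_conj_symm]
  -- norms
  have hnorm_sq : ‖p‖ ^ 2 = ‖(x : H)‖ ^ 2 + ‖p.snd‖ ^ 2 := by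
    rw [WithLp.prod_norm_sq_eq_of_L2, hx1]
  have habs_c : ‖c‖ = 1 / (m + 1) := by
    rw [hc, norm_inv, show ((m : ℂ) + 1) = ((m + 1 : ℕ) : ℂ) by push_cast; ring,
      Complex.norm_natCast, one_div]
    push_cast
    ring
  have key : ‖(x : H)‖ ^ 2 + ‖p.snd‖ ^ 2 ≤ (1 / (m + 1)) * ‖(x : H)‖ * ‖z‖ := by
    have h1 : (‖p‖ : ℂ) ^ 2 = starRingEnd ℂ c * ⟪(x : H), z⟫ := by
      rw [← hinner, hexp, hAx]
    have h2 : (‖p‖ : ℝ) ^ 2 = ‖starRingEnd ℂ c * ⟪(x : H), z⟫‖ := by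
      rw [← h1]
      rw [show ((‖p‖ : ℂ) ^ 2) = (((‖p‖ ^ 2 : ℝ)) : ℂ) by push_cast; ring]
      rw [Complex.norm_real, Real.norm_eq_abs, abs_of_nonneg (by positivity)]
    rw [hnorm_sq] at h2
    rw [h2, norm_mul, Complex.norm_conj, habs_c]
    have := norm_inner_le_norm (𝕜 := ℂ) (x : H) z
    calc (1 / (m + 1 : ℝ)) * ‖⟪(x : H), z⟫‖
        ≤ (1 / (m + 1)) * (‖(x : H)‖ * ‖z‖) := by
          apply mul_le_mul_of_nonneg_left _ (by positivity)
          exact this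
      _ = (1 / (m + 1)) * ‖(x : H)‖ * ‖z‖ := by ring
  -- conclude
  have hfinal : ‖p.snd‖ ≤ ‖z‖ / (m + 1) := by
    set r : ℝ := 1 / (m + 1) with hr
    have hrpos : (0 : ℝ) < r := by positivity
    have hxn : (0 : ℝ) ≤ ‖(x : H)‖ := norm_nonneg _
    have hzn : (0 : ℝ) ≤ ‖z‖ := norm_nonneg _
    have hpn : (0 : ℝ) ≤ ‖p.snd‖ := norm_nonneg _
    have hb2 : ‖p.snd‖ ^ 2 ≤ (‖z‖ * r) ^ 2 := by
      nlinarith [sq_nonneg (‖(x : H)‖ - r * ‖z‖), sq_nonneg ‖(x : H)‖]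
    have hb : ‖p.snd‖ ≤ ‖z‖ * r := by
      nlinarith [hb2, mul_nonneg hzn hrpos.le]
    calc ‖p.snd‖ ≤ ‖z‖ * r := hb
      _ = ‖z‖ / (m + 1) := by rw [hr]; ring
  rw [sndQ_apply]
  exact hfinal

/-- Density of the domain of the adjoint. -/
lemma dense_adj (A : H →ₗ.[ℂ] H) (hclosed : IsClosed (A.graph : Set (H × H))) :
    Dense {y : H | ∃ z : H, ∀ x : A.domain, ⟪y, A x⟫ = ⟪z, (x : H)⟫} := by
  set G : Submodule ℂ (E2 H) := Kc A 1 with hG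
  have hGclosed : IsClosed ((G : Submodule ℂ (E2 H)) : Set (E2 H)) :=
    isClosed_Kc A hclosed one_ne_zero
  set sndL : E2 H →ₗ[ℂ] H :=
    (LinearMap.snd ℂ H H).comp (WithLp.linearEquiv 2 ℂ (H × H)).toLinearMap with hsndL
  set T : Submodule ℂ H := Gᗮ.map sndL with hT
  have hTtop : T.topologicalClosure = ⊤ := by
    rw [Submodule.topologicalClosure_eq_top_iff, Submodule.eq_bot_iff]
    intro v hv
    rw [Submodule.mem_orthogonal] at hv
    have h0v : L H (0, v) ∈ Gᗮᗮ := by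
      rw [Submodule.mem_orthogonal]
      intro u hu
      have h1 := hv (sndL u) (Submodule.mem_map_of_mem hu)
      rw [WithLp.prod_inner_apply]
      have h1' : ⟪u.snd, v⟫ = 0 := h1
      simpa using h1'
    rw [Submodule.orthogonal_orthogonal_eq_closure,
      hGclosed.submodule_topologicalClosure_eq] at h0v
    obtain ⟨x, hx1, hx2⟩ := mem_Kc.mp h0v
    have hx0 : x = 0 := by
      apply Subtype.ext
      simpa using hx1
    have : A x = v := by simpa using hx2
    rw [← this, hx0]
    simp
  have hTdense : Dense (T : Set H) := by
    rw [← Submodule.dense_iff_topologicalClosure_eq_top] at hTtop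
    exact hTtop
  refine hTdense.mono ?_
  rintro y ⟨p, hp, rfl⟩
  refine ⟨-(p.fst), fun x => ?_⟩
  have hp2 : ∀ u ∈ G, ⟪u, p⟫ = 0 := (Submodule.mem_orthogonal G p).mp hp
  have hmem : L H ((x : H), A x) ∈ G := mem_Kc.mpr ⟨x, by simp, by simp⟩
  have h1 := hp2 _ hmem
  rw [WithLp.prod_inner_apply] at h1
  change ⟪(x : H), p.fst⟫ + ⟪A x, p.snd⟫ = 0 at h1
  have h2 := congrArg (starRingEnd ℂ) h1
  rw [map_add, inner_conj_symm, inner_conj_symm, map_zero] at h2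
  have : sndL p = p.snd := rfl
  rw [this, inner_neg_left]
  linear_combination h2

lemma tendsto_sndQ (A : H →ₗ.[ℂ] H) (hclosed : IsClosed (A.graph : Set (H × H))) (y : H) :
    Tendsto (fun m => sndQ A hclosed m (L H (0, y))) atTop (𝓝 0) := by
  rw [NormedAddCommGroup.tendsto_nhds_zero]
  intro ε hε
  obtain ⟨y', hy'S, hy'⟩ : ∃ y' ∈ {y : H | ∃ z : H, ∀ x : A.domain, ⟪y, A x⟫ = ⟪z, (x : H)⟫},
      dist y y' < ε / 2 := by
    have := dense_adj A hclosed y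
    exact Metric.mem_closure_iff.mp this (ε / 2) (by positivity)
  obtain ⟨z, hz⟩ := hy'S
  have hbound : ∀ m : ℕ, ‖sndQ A hclosed m (L H (0, y))‖ ≤ ‖y - y'‖ + ‖z‖ / (m + 1) := by
    intro m
    have hsplit : (L H (0, y) : E2 H) = L H (0, y - y') + L H (0, y') := by
      rw [← map_add]
      congr 1
      simp
    rw [hsplit, map_add]
    refine (norm_add_le _ _).trans ?_
    gcongr
    · refine (norm_sndQ_le A hclosed m _).trans ?_
      rw [show (L H (0, y - y') : E2 H) = WithLp.toLp 2 ((0 : H), y - y') from rfl]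
      rw [WithLp.norm_toLp_snd]
    · exact sndQ_bound A hclosed m hz
  have h2 : Tendsto (fun m : ℕ => ‖y - y'‖ + ‖z‖ / (m + 1)) atTop (𝓝 (‖y - y'‖ + 0)) := by
    apply Tendsto.add tendsto_const_nhds
    apply Tendsto.div_atTop tendsto_const_nhds
    exact tendsto_atTop_add_const_right _ _ tendsto_natCast_atTop_atTop
  rw [add_zero] at h2
  have hlt : ‖y - y'‖ < ε / 2 := by
    rwa [← dist_eq_norm]
  have h3 : ∀ᶠ m : ℕ in atTop, ‖y - y'‖ + ‖z‖ / (m + 1) < ε :=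
    h2.eventually_lt_const (by linarith)
  filter_upwards [h3] with m hm
  exact lt_of_le_of_lt (hbound m) hm

end ClosedBaireAux

end ClosedBaireAux

open ClosedBaireAux in
/-- **Closed densely defined operators on a separable Hilbert space are of first Baire
class.** If `A` is a linear operator on a separable complex Hilbert space `H` with dense
domain and closed graph, then there is a sequence `(A_m)` of bounded linear operators on `H`
with `A_m x → A x` for every `x` in the domain of `A`. -/
theorem closed_operator_first_Baire_class
    {H : Type*} [NormedAddCommGroup H] [InnerProductSpace ℂ H] [CompleteSpace H]
    [TopologicalSpace.SeparableSpace H]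
    (A : H →ₗ.[ℂ] H) (hdense : Dense (A.domain : Set H))
    (hclosed : IsClosed (A.graph : Set (H × H))) :
    ∃ Am : ℕ → H →L[ℂ] H,
      ∀ x : A.domain, Tendsto (fun m => Am m (x : H)) atTop (𝓝 (A x)) := by
  refine ⟨fun m => ((m : ℂ) + 1) • (sndQ A hclosed m ∘L
    ((WithLp.prodContinuousLinearEquiv 2 ℂ H H).symm.toContinuousLinearMap ∘L
      ContinuousLinearMap.inl ℂ H H)), fun x => ?_⟩
  have hcm : ∀ m : ℕ, ((m : ℂ) + 1) ≠ 0 := fun m => by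
    rw [show ((m : ℂ) + 1) = ((m + 1 : ℕ) : ℂ) by push_cast; ring]
    exact_mod_cast Nat.succ_ne_zero m
  have hkey : ∀ m : ℕ, (((m : ℂ) + 1) • (sndQ A hclosed m ∘L
      ((WithLp.prodContinuousLinearEquiv 2 ℂ H H).symm.toContinuousLinearMap ∘L
        ContinuousLinearMap.inl ℂ H H))) (x : H)
      = A x - sndQ A hclosed m (L H (0, A x)) := by
    intro m
    haveI : CompleteSpace (Kc A (((m : ℂ) + 1)⁻¹)) :=
      (isClosed_Kc A hclosed (cm_ne_zero m)).completeSpace_coe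
    set c : ℂ := ((m : ℂ) + 1)⁻¹ with hc
    have happ : (((m : ℂ) + 1) • (sndQ A hclosed m ∘L
        ((WithLp.prodContinuousLinearEquiv 2 ℂ H H).symm.toContinuousLinearMap ∘L
          ContinuousLinearMap.inl ℂ H H))) (x : H)
        = ((m : ℂ) + 1) • sndQ A hclosed m (L H ((x : H), 0)) := rfl
    rw [happ]
    have hmem : L H ((x : H), c • A x) ∈ Kc A c := mem_Kc.mpr ⟨x, by simp, by simp⟩
    have hproj : (Submodule.orthogonalProjection (Kc A c) (L H ((x : H), c • A x)) : E2 H)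
        = L H ((x : H), c • A x) := by
      have := Submodule.orthogonalProjectionOnto_mem_subspace_eq_self
        (K := Kc A c) ⟨L H ((x : H), c • A x), hmem⟩
      exact congrArg Subtype.val this
    have hval : sndQ A hclosed m (L H ((x : H), c • A x)) = c • A x := by
      rw [sndQ_apply, hproj]; rfl
    have hsplit : (L H ((x : H), 0) : E2 H)
        = L H ((x : H), c • A x) - c • L H (0, A x) := by
      rw [← map_smul, ← map_sub]
      congr 1
      simp
    rw [hsplit, map_sub, map_smul, hval, smul_sub, smul_smul, smul_smul,
      mul_inv_cancel₀ (hcm m), one_smul, one_smul]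
  have hconv : Tendsto (fun m => A x - sndQ A hclosed m (L H (0, A x))) atTop (𝓝 (A x)) := by
    have := (tendsto_const_nhds (x := A x) (f := atTop (α := ℕ))).sub
      (tendsto_sndQ A hclosed (A x))
    simpa using this
  exact hconv.congr (fun m => (hkey m).symm)
end

section
/- Suppose there exist T > 0 and r ∈ (0,1) such that ‖S(t) u‖ ≤ r ‖u‖ for all t ≥ T. Then ‖u‖ ≤ (T / (1 − r)) · ‖v‖. (Extension of the Poincaré inequality: ‖u‖ ≤ c ‖A u‖ with v = A u.) -/
/-- **Extension of the Poincaré inequality.** Let `S(t)` (`t ≥ 0`) be contractions on a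
complex Banach space `X`, and let `u, v ∈ X` satisfy `S(t) u − u = ∫₀ᵗ S(τ) v dτ` for all
`t ≥ 0`, with `τ ↦ S(τ) v` continuous on `[0, ∞)`. If there are `T > 0` and `r ∈ (0, 1)`
with `‖S(t) u‖ ≤ r ‖u‖` for all `t ≥ T`, then `‖u‖ ≤ (T / (1 − r)) ‖v‖`. -/
theorem poincare_inequality_extension
    {X : Type*} [NormedAddCommGroup X] [NormedSpace ℂ X] [CompleteSpace X]
    (S : ℝ → X →L[ℂ] X) (hcontr : ∀ t : ℝ, 0 ≤ t → ‖S t‖ ≤ 1)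
    (u v : X)
    (hcont : ContinuousOn (fun τ => S τ v) (Set.Ici (0 : ℝ)))
    (hint : ∀ t : ℝ, 0 ≤ t → S t u - u = ∫ τ in (0 : ℝ)..t, S τ v)
    (T r : ℝ) (hT : 0 < T) (hr0 : 0 < r) (hr1 : r < 1)
    (hS : ∀ t : ℝ, T ≤ t → ‖S t u‖ ≤ r * ‖u‖) :
    ‖u‖ ≤ (T / (1 - r)) * ‖v‖ := by
  have hInt : ‖S T u - u‖ ≤ ‖v‖ * |T - 0| := by
    rw [hint T hT.le]
    apply intervalIntegral.norm_integral_le_of_norm_le_const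
    intro x hx
    rw [Set.uIoc_of_le hT.le] at hx
    calc ‖S x v‖ ≤ ‖S x‖ * ‖v‖ := (S x).le_opNorm v
      _ ≤ 1 * ‖v‖ := by
          exact mul_le_mul_of_nonneg_right (hcontr x hx.1.le) (norm_nonneg v)
      _ = ‖v‖ := one_mul _
  have h1 : ‖u‖ ≤ ‖S T u‖ + ‖S T u - u‖ := by
    have := norm_sub_norm_le (S T u) u
    linarith [abs_le.mp (abs_norm_sub_norm_le (S T u) u)]
  have h2 : ‖u‖ ≤ r * ‖u‖ + ‖v‖ * T := by
    have := hS T le_rfl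
    rw [abs_of_nonneg (by linarith : (0:ℝ) ≤ T - 0)] at hInt
    linarith
  have h3 : (1 - r) * ‖u‖ ≤ T * ‖v‖ := by ring_nf; ring_nf at h2; linarith
  rw [div_mul_eq_mul_div, le_div_iff₀ (by linarith : (0:ℝ) < 1 - r)]
  linarith [h3]
end

section
/- Fix p with 1 ≤ p < ∞. If for every u ∈ X the function t ↦ ‖S(t) u‖ᵖ is integrable on [0,∞), then there exist constants M ≥ 1 and μ > 0 such that ‖S(t)‖_{L(X)} ≤ M e^{−μ t} for all t ≥ 0. (Datko–Pazy theorem: integrability of all orbits forces uniform exponential stability.) -/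
open MeasureTheory

/-- **Datko–Pazy theorem.** Let `S` be a `C₀`-semigroup on a separable complex Banach space
`X` and fix `1 ≤ p < ∞`. If for every `u ∈ X` the function `t ↦ ‖S(t) u‖ᵖ` is integrable on
`[0, ∞)`, then there are constants `M ≥ 1` and `μ > 0` with `‖S(t)‖ ≤ M e^{−μ t}` for all
`t ≥ 0`. -/
theorem datko_pazy
    {X : Type*} [NormedAddCommGroup X] [NormedSpace ℂ X] [CompleteSpace X]
    [TopologicalSpace.SeparableSpace X]
    (S : ℝ → X →L[ℂ] X) (hS0 : S 0 = 1)
    (hsemi : ∀ s t : ℝ, 0 ≤ s → 0 ≤ t → S (s + t) = (S s).comp (S t))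
    (hcont : ∀ u : X, ContinuousOn (fun t => S t u) (Set.Ici (0 : ℝ)))
    (p : ℝ) (hp : 1 ≤ p)
    (hint : ∀ u : X, IntegrableOn (fun t => ‖S t u‖ ^ p) (Set.Ici (0 : ℝ)) volume) :
    ∃ M μ : ℝ, 1 ≤ M ∧ 0 < μ ∧ ∀ t : ℝ, 0 ≤ t → ‖S t‖ ≤ M * Real.exp (-μ * t) := by
  have hp0 : (0:ℝ) < p := lt_of_lt_of_le one_pos hp
  -- the orbit integral
  set I : X → ℝ := fun u => ∫ s in Set.Ici (0:ℝ), ‖S s u‖ ^ p with hI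
  have hInn : ∀ u, 0 ≤ I u := by
    intro u
    exact setIntegral_nonneg measurableSet_Ici fun s _ => Real.rpow_nonneg (norm_nonneg _) p
  -- Step A: bound on [0,1]
  obtain ⟨C, hC0, hC⟩ : ∃ C : ℝ, 0 ≤ C ∧ ∀ t ∈ Set.Icc (0:ℝ) 1, ‖S t‖ ≤ C := by
    have h1 : ∀ u : X, ∃ Cu, ∀ i : Set.Icc (0:ℝ) 1, ‖(fun i : Set.Icc (0:ℝ) 1 => S i.1) i u‖ ≤ Cu := by
      intro u
      obtain ⟨Cu, hCu⟩ := (isCompact_Icc (a := (0:ℝ)) (b := 1)).exists_bound_of_continuousOn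
        ((hcont u).mono (fun x hx => hx.1))
      exact ⟨Cu, fun i => hCu i.1 i.2⟩
    obtain ⟨C, hC⟩ := banach_steinhaus h1
    exact ⟨C, le_trans (norm_nonneg _) (hC ⟨0, by norm_num⟩), fun t ht => hC ⟨t, ht⟩⟩
  -- semigroup splitting of orbits
  have key : ∀ (u : X) (t s : ℝ), 0 ≤ s → s ≤ t → ‖S t u‖ ≤ ‖S (t - s)‖ * ‖S s u‖ := by
    intro u t s hs hst
    have h2 : S t u = S (t - s) (S s u) := by
      have h3 : t - s + s = t := by ring
      have h4 := hsemi (t - s) s (by linarith) hs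
      rw [h3] at h4
      rw [h4]; rfl
    rw [h2]; exact (S (t - s)).le_opNorm _
  -- integral comparison lemma
  have intkey : ∀ (u : X) (t a Ku : ℝ), 0 ≤ Ku → 0 ≤ a → a ≤ t →
      (∀ s ∈ Set.Icc a t, ‖S t u‖ ≤ Ku * ‖S s u‖) →
      (t - a) * ‖S t u‖ ^ p ≤ Ku ^ p * I u := by
    intro u t a Ku hKu ha hat hb
    have hsub : Set.Icc a t ⊆ Set.Ici (0:ℝ) := fun x hx => le_trans ha hx.1
    have hint' : IntegrableOn (fun s => ‖S s u‖ ^ p) (Set.Icc a t) volume :=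
      (hint u).mono_set hsub
    have h1 : ∫ _ in Set.Icc a t, ‖S t u‖ ^ p = (t - a) * ‖S t u‖ ^ p := by
      rw [setIntegral_const, Measure.real, Real.volume_Icc, ENNReal.toReal_ofReal (by linarith), smul_eq_mul]
    rw [← h1]
    calc ∫ _ in Set.Icc a t, ‖S t u‖ ^ p
        ≤ ∫ s in Set.Icc a t, Ku ^ p * ‖S s u‖ ^ p := by
          apply setIntegral_mono_on
          · exact integrableOn_const (by rw [Real.volume_Icc]; exact ENNReal.ofReal_ne_top)
          · exact hint'.const_mul _
          · exact measurableSet_Icc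
          · intro s hs
            calc ‖S t u‖ ^ p ≤ (Ku * ‖S s u‖) ^ p :=
                  Real.rpow_le_rpow (norm_nonneg _) (hb s hs) (le_of_lt hp0)
              _ = Ku ^ p * ‖S s u‖ ^ p := Real.mul_rpow hKu (norm_nonneg _)
      _ = Ku ^ p * ∫ s in Set.Icc a t, ‖S s u‖ ^ p := by rw [MeasureTheory.integral_const_mul]
      _ ≤ Ku ^ p * I u := by
          apply mul_le_mul_of_nonneg_left _ (Real.rpow_nonneg hKu p)
          exact setIntegral_mono_set (hint u)
            (Filter.Eventually.of_forall fun s => Real.rpow_nonneg (norm_nonneg _) p)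
            (HasSubset.Subset.eventuallyLE hsub)
  -- Step C: uniform bound K on all of [0,∞)
  obtain ⟨K, hK⟩ : ∃ K : ℝ, ∀ t : ℝ, 0 ≤ t → ‖S t‖ ≤ K := by
    have h1 : ∀ u : X, ∃ Cu, ∀ i : {t : ℝ // 0 ≤ t},
        ‖(fun i : {t : ℝ // 0 ≤ t} => S i.1) i u‖ ≤ Cu := by
      intro u
      obtain ⟨Cu, hCu⟩ := (isCompact_Icc (a := (0:ℝ)) (b := 1)).exists_bound_of_continuousOn
        ((hcont u).mono (fun x hx => hx.1))
      refine ⟨max Cu ((C ^ p * I u) ^ p⁻¹), fun i => ?_⟩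
      rcases le_or_gt i.1 1 with h | h
      · exact le_max_of_le_left (hCu i.1 ⟨i.2, h⟩)
      · refine le_max_of_le_right ?_
        have hb : ∀ s ∈ Set.Icc (i.1 - 1) i.1, ‖S i.1 u‖ ≤ C * ‖S s u‖ := by
          intro s hs
          refine (key u i.1 s (by linarith [hs.1]) hs.2).trans
            (mul_le_mul_of_nonneg_right (hC _ ⟨by linarith [hs.2], by linarith [hs.1]⟩)
              (norm_nonneg _))
        have h2 := intkey u i.1 (i.1 - 1) C hC0 (by linarith) (by linarith) hb
        rw [show i.1 - (i.1 - 1) = 1 by ring, one_mul] at h2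
        calc ‖S i.1 u‖ = (‖S i.1 u‖ ^ p) ^ p⁻¹ :=
              (Real.rpow_rpow_inv (norm_nonneg _) (ne_of_gt hp0)).symm
          _ ≤ (C ^ p * I u) ^ p⁻¹ :=
              Real.rpow_le_rpow (Real.rpow_nonneg (norm_nonneg _) p) h2
                (by positivity)
    obtain ⟨K, hK⟩ := banach_steinhaus h1
    exact ⟨K, fun t ht => hK ⟨t, ht⟩⟩
  set K' : ℝ := max K 1 with hK'def
  have hK'1 : (1:ℝ) ≤ K' := le_max_right _ _
  have hK'0 : (0:ℝ) ≤ K' := by linarith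
  have hK' : ∀ t : ℝ, 0 ≤ t → ‖S t‖ ≤ K' := fun t ht => (hK t ht).trans (le_max_left _ _)
  -- Step D: t^{1/p} ‖S t‖ bounded for t ≥ 1
  obtain ⟨N, hN⟩ : ∃ N : ℝ, ∀ t : ℝ, 1 ≤ t → t ^ p⁻¹ * ‖S t‖ ≤ N := by
    have h1 : ∀ u : X, ∃ Cu, ∀ i : {t : ℝ // 1 ≤ t},
        ‖(fun i : {t : ℝ // 1 ≤ t} => ((i.1 ^ p⁻¹ : ℝ) : ℂ) • S i.1) i u‖ ≤ Cu := by
      intro u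
      refine ⟨(K' ^ p * I u) ^ p⁻¹, fun i => ?_⟩
      have hi0 : (0:ℝ) ≤ i.1 := le_trans zero_le_one i.2
      have hb : ∀ s ∈ Set.Icc (0:ℝ) i.1, ‖S i.1 u‖ ≤ K' * ‖S s u‖ := by
        intro s hs
        exact (key u i.1 s hs.1 hs.2).trans
          (mul_le_mul_of_nonneg_right (hK' _ (by linarith [hs.2])) (norm_nonneg _))
      have h2 := intkey u i.1 0 K' hK'0 le_rfl hi0 hb
      rw [sub_zero] at h2
      have h3 : ‖(((i.1 ^ p⁻¹ : ℝ) : ℂ)) • S i.1 u‖ = i.1 ^ p⁻¹ * ‖S i.1 u‖ := by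
        rw [norm_smul, Complex.norm_real, Real.norm_eq_abs,
          abs_of_nonneg (Real.rpow_nonneg hi0 _)]
      show ‖(((i.1 ^ p⁻¹ : ℝ) : ℂ) • S i.1) u‖ ≤ (K' ^ p * I u) ^ p⁻¹
      rw [ContinuousLinearMap.smul_apply, h3]
      calc i.1 ^ p⁻¹ * ‖S i.1 u‖ = (i.1 * ‖S i.1 u‖ ^ p) ^ p⁻¹ := by
            rw [Real.mul_rpow hi0 (Real.rpow_nonneg (norm_nonneg _) p),
              Real.rpow_rpow_inv (norm_nonneg _) (ne_of_gt hp0)]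
        _ ≤ (K' ^ p * I u) ^ p⁻¹ :=
            Real.rpow_le_rpow (by positivity) h2 (by positivity)
    obtain ⟨N, hN⟩ := banach_steinhaus h1
    refine ⟨N, fun t ht => ?_⟩
    have h5 : ‖((t ^ p⁻¹ : ℝ) : ℂ) • S t‖ ≤ N := hN ⟨t, ht⟩
    have h6 : ‖((t ^ p⁻¹ : ℝ) : ℂ) • S t‖ = ‖((t ^ p⁻¹ : ℝ) : ℂ)‖ * ‖S t‖ := norm_smul (((t ^ p⁻¹ : ℝ) : ℂ)) (S t)
    rw [h6, Complex.norm_real, Real.norm_eq_abs,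
      abs_of_nonneg (Real.rpow_nonneg (by linarith) _)] at h5
    exact h5
  have hN0 : 0 ≤ N := by
    have := hN 1 le_rfl
    have h1 : (1:ℝ) ^ p⁻¹ = 1 := Real.one_rpow _
    nlinarith [norm_nonneg (S 1)]
  -- choose t₀ ≥ 1 with ‖S t₀‖ ≤ 1/2
  set t₀ : ℝ := (2 * N + 1) ^ p with ht₀def
  have ht₀1 : (1:ℝ) ≤ t₀ := by
    calc (1:ℝ) = 1 ^ p := (Real.one_rpow p).symm
      _ ≤ (2 * N + 1) ^ p := Real.rpow_le_rpow zero_le_one (by linarith) (le_of_lt hp0)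
  have ht₀p : t₀ ^ p⁻¹ = 2 * N + 1 := Real.rpow_rpow_inv (by linarith) (ne_of_gt hp0)
  have hhalf : ‖S t₀‖ ≤ 1 / 2 := by
    have h1 := hN t₀ ht₀1
    rw [ht₀p] at h1
    nlinarith [norm_nonneg (S t₀)]
  -- iterate
  have iter : ∀ n : ℕ, ‖S (n * t₀)‖ ≤ (1/2:ℝ) ^ n := by
    intro n
    induction n with
    | zero => simp [hS0]; exact ContinuousLinearMap.norm_id_le
    | succ n ih =>
      have h1 : ((n + 1 : ℕ) : ℝ) * t₀ = t₀ + n * t₀ := by push_cast; ring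
      rw [h1, hsemi t₀ (n * t₀) (by linarith) (by positivity)]
      calc ‖(S t₀).comp (S (n * t₀))‖ ≤ ‖S t₀‖ * ‖S (n * t₀)‖ :=
            ContinuousLinearMap.opNorm_comp_le _ _
        _ ≤ (1/2) * (1/2) ^ n := by
            apply mul_le_mul hhalf ih (norm_nonneg _) (by norm_num)
        _ = (1/2) ^ (n+1) := by ring
  -- conclude
  have ht₀0 : (0:ℝ) < t₀ := by linarith
  refine ⟨2 * K', Real.log 2 / t₀, by linarith, by positivity, fun t ht => ?_⟩
  set n : ℕ := ⌊t / t₀⌋₊ with hn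
  have hn1 : (n : ℝ) * t₀ ≤ t := by
    have := Nat.floor_le (div_nonneg ht (le_of_lt ht₀0))
    calc (n:ℝ) * t₀ ≤ (t / t₀) * t₀ := mul_le_mul_of_nonneg_right this (le_of_lt ht₀0)
      _ = t := by field_simp
  have hn2 : t < ((n:ℝ) + 1) * t₀ := by
    have := Nat.lt_floor_add_one (t / t₀)
    calc t = (t / t₀) * t₀ := by field_simp
      _ < ((n:ℝ) + 1) * t₀ := mul_lt_mul_of_pos_right this ht₀0
  have hsplit : S t = (S ((n:ℝ) * t₀)).comp (S (t - n * t₀)) := by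
    rw [← hsemi ((n:ℝ) * t₀) (t - n * t₀) (by positivity) (by linarith)]
    ring_nf
  have hbound : ‖S t‖ ≤ (1/2:ℝ) ^ n * K' := by
    rw [hsplit]
    exact (ContinuousLinearMap.opNorm_comp_le _ _).trans
      (mul_le_mul (iter n) (hK' _ (by linarith)) (norm_nonneg _) (by positivity))
  have hexp : (1/2:ℝ) ^ n ≤ 2 * Real.exp (-(Real.log 2 / t₀) * t) := by
    have hlog : (0:ℝ) < Real.log 2 := Real.log_pos (by norm_num)
    have h1 : (1/2:ℝ) ^ n = Real.exp (-(n * Real.log 2)) := by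
      rw [Real.exp_neg, Real.exp_nat_mul, Real.exp_log (by norm_num : (0:ℝ) < 2)]
      simp [inv_pow]
    rw [h1]
    have h2 : -(↑n * Real.log 2) ≤ Real.log 2 + (-(Real.log 2 / t₀) * t) := by
      have h3 : t / t₀ - 1 ≤ (n:ℝ) := by
        have := hn2
        rw [div_sub_one (ne_of_gt ht₀0)]
        rw [div_le_iff₀ ht₀0]
        nlinarith
      have h4 := mul_le_mul_of_nonneg_right h3 (le_of_lt hlog)
      have h5 : (Real.log 2 / t₀) * t = (t / t₀) * Real.log 2 := by ring
      nlinarith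
    calc Real.exp (-(↑n * Real.log 2)) ≤ Real.exp (Real.log 2 + (-(Real.log 2 / t₀) * t)) :=
          Real.exp_le_exp.2 h2
      _ = 2 * Real.exp (-(Real.log 2 / t₀) * t) := by
          rw [Real.exp_add, Real.exp_log (by norm_num : (0:ℝ) < 2)]
  calc ‖S t‖ ≤ (1/2:ℝ) ^ n * K' := hbound
    _ ≤ (2 * Real.exp (-(Real.log 2 / t₀) * t)) * K' :=
        mul_le_mul_of_nonneg_right hexp hK'0
    _ = 2 * K' * Real.exp (-(Real.log 2 / t₀) * t) := by ring
end

section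
/- Suppose M := Σ_{n=1}^∞ λ_n² ‖ψ_n‖_B² < ∞. Then for every u ∈ B the series T u := Σ_{n=1}^∞ λ_n ⟪j u, j ψ_n⟫_H ψ_n converges in B, and ‖T u‖_B² ≤ M · Σ_{n=1}^∞ |⟪j u, j ψ_n⟫_H|² ≤ M · ‖j u‖_H²; in particular T defines a bounded linear operator from B to B. (Boundedness of the Gross–Kuelbs operator T₁₂ on B.) -/
/-- Cauchy–Schwarz for series of nonnegative reals. -/
lemma tsum_cs (f g : ℕ → ℝ) (hf0 : ∀ n, 0 ≤ f n) (hg0 : ∀ n, 0 ≤ g n)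
    (hf : Summable fun n => f n ^ 2) (hg : Summable fun n => g n ^ 2)
    (hfg : Summable fun n => f n * g n) :
    (∑' n, f n * g n) ^ 2 ≤ (∑' n, f n ^ 2) * ∑' n, g n ^ 2 := by
  have hM1 : 0 ≤ ∑' n, f n ^ 2 := tsum_nonneg fun n => sq_nonneg _
  have hM2 : 0 ≤ ∑' n, g n ^ 2 := tsum_nonneg fun n => sq_nonneg _
  have hle : ∑' n, f n * g n ≤ Real.sqrt ((∑' n, f n ^ 2) * ∑' n, g n ^ 2) := by
    refine Summable.tsum_le_of_sum_le hfg fun s => ?_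
    rw [Real.le_sqrt (Finset.sum_nonneg fun n _ => mul_nonneg (hf0 n) (hg0 n))
      (mul_nonneg hM1 hM2)]
    calc (∑ n ∈ s, f n * g n) ^ 2 ≤ (∑ n ∈ s, f n ^ 2) * ∑ n ∈ s, g n ^ 2 :=
          Finset.sum_mul_sq_le_sq_mul_sq s f g
      _ ≤ (∑' n, f n ^ 2) * ∑' n, g n ^ 2 :=
          mul_le_mul (Summable.sum_le_tsum s (fun n _ => sq_nonneg _) hf)
            (Summable.sum_le_tsum s (fun n _ => sq_nonneg _) hg)
            (Finset.sum_nonneg fun n _ => sq_nonneg _) hM1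
  calc (∑' n, f n * g n) ^ 2 ≤ Real.sqrt ((∑' n, f n ^ 2) * ∑' n, g n ^ 2) ^ 2 := by
        have h0 : 0 ≤ ∑' n, f n * g n := tsum_nonneg fun n => mul_nonneg (hf0 n) (hg0 n)
        gcongr
    _ = (∑' n, f n ^ 2) * ∑' n, g n ^ 2 := Real.sq_sqrt (mul_nonneg hM1 hM2)

/-- **Boundedness of the Gross–Kuelbs operator `T₁₂` on `B`.** Let `j : B → H` be a
continuous dense embedding of a separable complex Banach space into a complex Hilbert space,
let `(ψ_n) ⊂ B` be such that `(j ψ_n)` is orthonormal in `H`, and let `(λ_n)` be positive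
reals with `M := Σ λ_n² ‖ψ_n‖² < ∞`. Then for every `u ∈ B` the series
`T u := Σ_n λ_n ⟪j u, j ψ_n⟫ ψ_n` converges in `B` and
`‖T u‖² ≤ M Σ_n |⟪j u, j ψ_n⟫|² ≤ M ‖j u‖²`; in particular `T` defines a bounded linear
operator on `B`. -/
theorem gross_kuelbs_operator_bounded
    {B H : Type*} [NormedAddCommGroup B] [NormedSpace ℂ B] [CompleteSpace B]
    [TopologicalSpace.SeparableSpace B]
    [NormedAddCommGroup H] [InnerProductSpace ℂ H] [CompleteSpace H]
    (j : B →L[ℂ] H) (hj_inj : Function.Injective j) (hj_dense : DenseRange j)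
    (ψ : ℕ → B) (hortho : Orthonormal ℂ fun n => j (ψ n))
    (lam : ℕ → ℝ) (hlam : ∀ n, 0 < lam n)
    (hM : Summable fun n => lam n ^ 2 * ‖ψ n‖ ^ 2) :
    (∀ u : B, Summable fun n => ((lam n : ℂ) * (inner ℂ (j (ψ n)) (j u) : ℂ)) • ψ n) ∧
    (∀ u : B, Summable fun n => ‖(inner ℂ (j (ψ n)) (j u) : ℂ)‖ ^ 2) ∧
    (∀ u : B,
      ‖∑' n, ((lam n : ℂ) * (inner ℂ (j (ψ n)) (j u) : ℂ)) • ψ n‖ ^ 2 ≤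
        (∑' n, lam n ^ 2 * ‖ψ n‖ ^ 2) * ∑' n, ‖(inner ℂ (j (ψ n)) (j u) : ℂ)‖ ^ 2) ∧
    (∀ u : B, (∑' n, ‖(inner ℂ (j (ψ n)) (j u) : ℂ)‖ ^ 2) ≤ ‖j u‖ ^ 2) ∧
    ∃ T : B →L[ℂ] B,
      ∀ u : B, T u = ∑' n, ((lam n : ℂ) * (inner ℂ (j (ψ n)) (j u) : ℂ)) • ψ n := by
  -- Bessel
  have hbessel : ∀ u : B, Summable fun n => ‖(inner ℂ (j (ψ n)) (j u) : ℂ)‖ ^ 2 :=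
    fun u => hortho.inner_products_summable (j u)
  have hbessel_le : ∀ u : B, (∑' n, ‖(inner ℂ (j (ψ n)) (j u) : ℂ)‖ ^ 2) ≤ ‖j u‖ ^ 2 :=
    fun u => hortho.tsum_inner_products_le (j u)
  -- square summability of lam * ‖ψ‖ rephrased
  have hfsq : Summable fun n => (lam n * ‖ψ n‖) ^ 2 := by
    simpa [mul_pow] using hM
  -- norm of each term
  have hterm : ∀ (u : B) (n : ℕ),
      ‖((lam n : ℂ) * (inner ℂ (j (ψ n)) (j u) : ℂ)) • ψ n‖
        = (lam n * ‖ψ n‖) * ‖(inner ℂ (j (ψ n)) (j u) : ℂ)‖ := by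
    intro u n
    rw [norm_smul, norm_mul]
    simp [Complex.norm_real, abs_of_pos (hlam n)]
    ring
  -- absolute summability
  have hnormsum : ∀ u : B,
      Summable fun n => (lam n * ‖ψ n‖) * ‖(inner ℂ (j (ψ n)) (j u) : ℂ)‖ := by
    intro u
    refine Summable.of_nonneg_of_le
      (fun n => mul_nonneg (mul_nonneg (hlam n).le (norm_nonneg _)) (norm_nonneg _))
      (fun n => ?_) (((hfsq.add (hbessel u)).div_const 2))
    have := sq_nonneg (lam n * ‖ψ n‖ - ‖(inner ℂ (j (ψ n)) (j u) : ℂ)‖)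
    nlinarith [sq_nonneg (lam n * ‖ψ n‖ + ‖(inner ℂ (j (ψ n)) (j u) : ℂ)‖)]
  have hsum : ∀ u : B, Summable fun n => ((lam n : ℂ) * (inner ℂ (j (ψ n)) (j u) : ℂ)) • ψ n := by
    intro u
    refine Summable.of_norm ?_
    simpa only [hterm u] using hnormsum u
  -- the key norm bound
  have hbound : ∀ u : B,
      ‖∑' n, ((lam n : ℂ) * (inner ℂ (j (ψ n)) (j u) : ℂ)) • ψ n‖ ^ 2 ≤
        (∑' n, lam n ^ 2 * ‖ψ n‖ ^ 2) * ∑' n, ‖(inner ℂ (j (ψ n)) (j u) : ℂ)‖ ^ 2 := by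
    intro u
    have h1 : ‖∑' n, ((lam n : ℂ) * (inner ℂ (j (ψ n)) (j u) : ℂ)) • ψ n‖
        ≤ ∑' n, (lam n * ‖ψ n‖) * ‖(inner ℂ (j (ψ n)) (j u) : ℂ)‖ := by
      calc ‖∑' n, ((lam n : ℂ) * (inner ℂ (j (ψ n)) (j u) : ℂ)) • ψ n‖
          ≤ ∑' n, ‖((lam n : ℂ) * (inner ℂ (j (ψ n)) (j u) : ℂ)) • ψ n‖ :=
            norm_tsum_le_tsum_norm (by simpa only [hterm u] using hnormsum u)
        _ = ∑' n, (lam n * ‖ψ n‖) * ‖(inner ℂ (j (ψ n)) (j u) : ℂ)‖ :=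
            tsum_congr fun n => hterm u n
    have h2 : (∑' n, (lam n * ‖ψ n‖) * ‖(inner ℂ (j (ψ n)) (j u) : ℂ)‖) ^ 2 ≤
        (∑' n, (lam n * ‖ψ n‖) ^ 2) * ∑' n, ‖(inner ℂ (j (ψ n)) (j u) : ℂ)‖ ^ 2 :=
      tsum_cs _ _ (fun n => mul_nonneg (hlam n).le (norm_nonneg _))
        (fun n => norm_nonneg _) hfsq (hbessel u) (hnormsum u)
    have heq : (∑' n, (lam n * ‖ψ n‖) ^ 2) = ∑' n, lam n ^ 2 * ‖ψ n‖ ^ 2 :=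
      tsum_congr fun n => by ring
    calc ‖∑' n, ((lam n : ℂ) * (inner ℂ (j (ψ n)) (j u) : ℂ)) • ψ n‖ ^ 2
        ≤ (∑' n, (lam n * ‖ψ n‖) * ‖(inner ℂ (j (ψ n)) (j u) : ℂ)‖) ^ 2 :=
          pow_le_pow_left₀ (norm_nonneg _) h1 2
      _ ≤ (∑' n, lam n ^ 2 * ‖ψ n‖ ^ 2) * ∑' n, ‖(inner ℂ (j (ψ n)) (j u) : ℂ)‖ ^ 2 := by
          rw [← heq]; exact h2
  refine ⟨hsum, hbessel, hbound, hbessel_le, ?_⟩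
  -- build the operator
  set M := ∑' n, lam n ^ 2 * ‖ψ n‖ ^ 2 with hMdef
  have hM0 : 0 ≤ M := tsum_nonneg fun n =>
    mul_nonneg (sq_nonneg _) (sq_nonneg _)
  let Tlin : B →ₗ[ℂ] B :=
    { toFun := fun u => ∑' n, ((lam n : ℂ) * (inner ℂ (j (ψ n)) (j u) : ℂ)) • ψ n
      map_add' := fun u v => by
        rw [← Summable.tsum_add (hsum u) (hsum v)]
        refine tsum_congr fun n => ?_
        rw [map_add, inner_add_right, mul_add, add_smul]
      map_smul' := fun c u => by
        simp only [RingHom.id_apply]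
        rw [← tsum_const_smul'' c]
        refine tsum_congr fun n => ?_
        rw [map_smul, inner_smul_right, smul_smul]
        ring_nf }
  refine ⟨Tlin.mkContinuous (Real.sqrt M * ‖j‖) fun u => ?_, fun u => rfl⟩
  have h1 : ‖Tlin u‖ ^ 2 ≤ M * ‖j u‖ ^ 2 :=
    le_trans (hbound u) (by
      have := hbessel_le u
      have h2 : (∑' n, ‖(inner ℂ (j (ψ n)) (j u) : ℂ)‖ ^ 2) ≥ 0 :=
        tsum_nonneg fun n => sq_nonneg _
      nlinarith)
  have h3 : ‖j u‖ ≤ ‖j‖ * ‖u‖ := j.le_opNorm u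
  have h4 : ‖Tlin u‖ ^ 2 ≤ (Real.sqrt M * ‖j‖ * ‖u‖) ^ 2 := by
    have : M * ‖j u‖ ^ 2 ≤ M * (‖j‖ * ‖u‖) ^ 2 := by
      have := pow_le_pow_left₀ (norm_nonneg (j u)) h3 2
      nlinarith
    calc ‖Tlin u‖ ^ 2 ≤ M * (‖j‖ * ‖u‖) ^ 2 := le_trans h1 this
      _ = (Real.sqrt M * ‖j‖ * ‖u‖) ^ 2 := by
        rw [mul_pow, mul_pow, mul_pow, Real.sq_sqrt hM0]; ring
  have h5 : 0 ≤ Real.sqrt M * ‖j‖ * ‖u‖ :=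
    mul_nonneg (mul_nonneg (Real.sqrt_nonneg _) (norm_nonneg _)) (norm_nonneg _)
  nlinarith [norm_nonneg (Tlin u)]
end
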